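/- arXiv:0810.5240 — 10 statements merged into one kernel-verified Lean document; each statement's English description precedes it below -/
import Mathlib

section
/- Let k be any field, let λ ∈ k be nonzero, and let l, m be positive integers. Then the Kronecker product J_λ(l) ⊗ J_0(m) is similar to the direct sum of l copies of J_0(m). -/
open Matrix Kronecker

/-- The Jordan block of size `l` with eigenvalue `c` : the `l × l` matrix with `c` on the
diagonal, `1` directly above the diagonal and `0` elsewhere. -/
def jordanBlock {k : Type*} [Field k] (c : k) (l : ℕ) : Matrix (Fin l) (Fin l) k :=
  Matrix.of fun i j => if (j : ℕ) = i then c else if (j : ℕ) = (i : ℕ) + 1 then 1 else 0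

/-- Similarity of square matrices, allowing reindexing along a bijection of the
(equinumerous) index types. -/
def MatSimilar {k : Type*} [Field k] {α β : Type*} [Fintype α] [DecidableEq α]
    [Fintype β] [DecidableEq β] (A : Matrix α α k) (B : Matrix β β k) : Prop :=
  ∃ e : α ≃ β, ∃ T : Matrix β β k, IsUnit T ∧ Matrix.reindex e e A = T * B * T⁻¹

/-- A matrix on `Σ _ : Fin l, Fin m` that is "diagonal in the second index",
with blocks `f x`. -/
private def ediag {k : Type*} [Field k] {l m : ℕ} (f : Fin m → Matrix (Fin l) (Fin l) k) :
    Matrix (Σ _ : Fin l, Fin m) (Σ _ : Fin l, Fin m) k :=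
  Matrix.of fun σ τ => if σ.2 = τ.2 then f σ.2 σ.1 τ.1 else 0

private lemma ediag_mul {k : Type*} [Field k] {l m : ℕ}
    (f g : Fin m → Matrix (Fin l) (Fin l) k) :
    ediag f * ediag g = ediag (fun x => f x * g x) := by
  ext ⟨i, x⟩ ⟨j, y⟩
  rw [Matrix.mul_apply, ← Finset.univ_sigma_univ, Finset.sum_sigma]
  simp only [ediag, Matrix.of_apply, Matrix.mul_apply, ite_mul, mul_ite, zero_mul, mul_zero,
    Finset.sum_ite_eq, Finset.mem_univ, if_true]
  by_cases h : x = y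
  · subst h; simp
  · simp [h, Ne.symm h]

private lemma ediag_one {k : Type*} [Field k] {l m : ℕ} :
    ediag (fun _ : Fin m => (1 : Matrix (Fin l) (Fin l) k)) = 1 := by
  ext ⟨i, x⟩ ⟨j, y⟩
  simp only [ediag, Matrix.of_apply, Matrix.one_apply, Sigma.mk.inj_iff, heq_eq_eq]
  by_cases h : x = y <;> by_cases h' : i = j <;> simp [h, h', and_comm]

theorem stmt1 {k : Type*} [Field k] (lam : k) (hlam : lam ≠ 0)
    (l m : ℕ) (hl : 0 < l) (hm : 0 < m) :
    MatSimilar (jordanBlock lam l ⊗ₖ jordanBlock (0 : k) m)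
      (Matrix.blockDiagonal' fun _ : Fin l => jordanBlock (0 : k) m) := by
  classical
  set A := jordanBlock lam l with hA
  set N := jordanBlock (0 : k) m with hNdef
  have hNapply : ∀ x y : Fin m, N x y = if (y : ℕ) = (x : ℕ) + 1 then (1 : k) else 0 := by
    intro x y
    simp only [hNdef, jordanBlock, Matrix.of_apply]
    split_ifs <;> first | rfl | omega
  -- A is invertible
  have hAtri : A.BlockTriangular id := by
    intro i j hij
    have hji : (j : ℕ) < (i : ℕ) := hij
    simp only [hA, jordanBlock, Matrix.of_apply]
    rw [if_neg (by omega), if_neg (by omega)]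
  have hAdet : A.det = lam ^ l := by
    rw [Matrix.det_of_upperTriangular hAtri]
    have hdiag : ∀ i : Fin l, A i i = lam := fun i => by simp [hA, jordanBlock]
    simp [hdiag]
  have hAunit : IsUnit A := (Matrix.isUnit_iff_isUnit_det A).mpr
    (by rw [hAdet]; exact (isUnit_iff_ne_zero.mpr hlam).pow l)
  -- the conjugating matrix
  set P : Fin m → Matrix (Fin l) (Fin l) k := fun x => A ^ (m - 1 - (x : ℕ)) with hP
  have hPunit : ∀ x, IsUnit (P x) := fun x => hAunit.pow _
  have hPdet : ∀ x, IsUnit (P x).det := fun x => (Matrix.isUnit_iff_isUnit_det _).mp (hPunit x)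
  set T := ediag P with hT
  set Tinv := ediag (fun x => (P x)⁻¹) with hTinvdef
  have h1 : T * Tinv = 1 := by
    rw [hT, hTinvdef, ediag_mul]
    have : (fun x => P x * (P x)⁻¹) = fun _ : Fin m => (1 : Matrix (Fin l) (Fin l) k) :=
      funext fun x => Matrix.mul_nonsing_inv _ (hPdet x)
    rw [this, ediag_one]
  have h2 : Tinv * T = 1 := by
    rw [hT, hTinvdef, ediag_mul]
    have : (fun x => (P x)⁻¹ * P x) = fun _ : Fin m => (1 : Matrix (Fin l) (Fin l) k) :=
      funext fun x => Matrix.nonsing_inv_mul _ (hPdet x)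
    rw [this, ediag_one]
  have hTunit : IsUnit T := ⟨⟨T, Tinv, h1, h2⟩, rfl⟩
  have hTinv : T⁻¹ = Tinv := Matrix.inv_eq_right_inv h1
  set e : Fin l × Fin m ≃ (Σ _ : Fin l, Fin m) := (Equiv.sigmaEquivProd (Fin l) (Fin m)).symm
    with he
  have hD : ∀ (p j : Fin l) (z y : Fin m),
      (Matrix.blockDiagonal' fun _ : Fin l => N) ⟨p, z⟩ ⟨j, y⟩
        = if p = j then N z y else 0 := by
    intro p j z y
    by_cases h : p = j
    · subst h; simp
    · simp [Matrix.blockDiagonal'_apply_ne _ _ _ h, h]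
  have key : (Matrix.reindex e e (A ⊗ₖ N)) * T
      = T * Matrix.blockDiagonal' (fun _ : Fin l => N) := by
    ext ⟨i, x⟩ ⟨j, y⟩
    rw [Matrix.mul_apply, Matrix.mul_apply, ← Finset.univ_sigma_univ, Finset.sum_sigma,
      Finset.sum_sigma]
    simp only [Matrix.reindex_apply, Matrix.submatrix_apply, he, Equiv.symm_symm,
      Equiv.sigmaEquivProd_apply, Matrix.kroneckerMap_apply, hD, hT, ediag, Matrix.of_apply,
      ite_mul, mul_ite, zero_mul, mul_zero, Finset.sum_ite_eq, Finset.sum_ite_eq',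
      Finset.mem_univ, if_true]
    have hL : ∑ p, (A i p * N x y) * P y p j = N x y * (A * P y) i j := by
      rw [Matrix.mul_apply, Finset.mul_sum]
      exact Finset.sum_congr rfl fun p _ => by ring
    rw [hL]
    simp only [Finset.sum_ite_irrel, Finset.sum_const_zero, Finset.sum_ite_eq,
      Finset.sum_ite_eq', Finset.mem_univ, if_true]
    by_cases hxy : (y : ℕ) = (x : ℕ) + 1
    · have hy : A * P y = P x := by
        have hylt : (y : ℕ) < m := y.isLt
        have hn : m - 1 - (y : ℕ) + 1 = m - 1 - (x : ℕ) := by omega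
        rw [hP]
        simp only []
        rw [← pow_succ', hn]
      rw [hNapply, if_pos hxy, hy, one_mul, mul_one]
    · rw [hNapply, if_neg hxy, zero_mul, mul_zero]
  refine ⟨e, T, hTunit, ?_⟩
  rw [hTinv]
  calc Matrix.reindex e e (A ⊗ₖ N)
      = Matrix.reindex e e (A ⊗ₖ N) * (T * Tinv) := by rw [h1, mul_one]
    _ = (Matrix.reindex e e (A ⊗ₖ N) * T) * Tinv := by rw [mul_assoc]
    _ = T * Matrix.blockDiagonal' (fun _ : Fin l => N) * Tinv := by rw [key]
end

section
/- Let k be any field and let l ≤ m be positive integers. Then the Kronecker product J_0(l) ⊗ J_0(m) is similar to the block-diagonal direct sum of (m − l + 1) copies of J_0(l) together with 2 copies of J_0(i) for each i = 1, …, l − 1. -/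
/-!
Index the standard basis of `kˡ ⊗ kᵐ` by the grid `Fin l × Fin m`. The Kronecker product of the
two nilpotent Jordan blocks has a `1` exactly in the entries `((i, j), (i + 1, j + 1))`, so it
moves along the diagonals `j - i = const`, each of which is a single Jordan chain. The `m - l + 1`
diagonals with `0 ≤ j - i ≤ m - l` have length `l`; the remaining ones have lengths
`1, …, l - 1`, each length occurring once above and once below. Listing the basis diagonal by
diagonal is therefore a permutation similarity onto the block-diagonal matrix.
-/

open Matrix Kronecker

lemma MatSimilar.of_apply_equiv {k : Type*} [Field k] {α β : Type*} [Fintype α] [DecidableEq α]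
    [Fintype β] [DecidableEq β] {A : Matrix α α k} {B : Matrix β β k} (e : β ≃ α)
    (h : ∀ i j, A (e i) (e j) = B i j) : MatSimilar A B :=
  ⟨e.symm, 1, isUnit_one, by ext i j; simp [h]⟩

section JordanBlock

variable {k : Type*} [Field k]

lemma jordanBlock_zero_apply (n : ℕ) (i j : Fin n) :
    jordanBlock (0 : k) n i j = if (j : ℕ) = i + 1 then 1 else 0 := by
  simp only [jordanBlock, of_apply]
  split_ifs <;> first | rfl | omega

lemma jordanBlock_zero_kronecker_apply (l m : ℕ) (p q : Fin l × Fin m) :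
    (jordanBlock (0 : k) l ⊗ₖ jordanBlock (0 : k) m) p q =
      if (q.1 : ℕ) = p.1 + 1 ∧ (q.2 : ℕ) = p.2 + 1 then 1 else 0 := by
  simp only [kroneckerMap_apply, jordanBlock_zero_apply, ite_zero_mul_ite_zero, mul_one]

lemma blockDiagonal'_jordanBlock_zero_apply {ι : Type*} [DecidableEq ι] (n : ι → ℕ)
    (p q : (b : ι) × Fin (n b)) :
    blockDiagonal' (fun b => jordanBlock (0 : k) (n b)) p q =
      if p.1 = q.1 ∧ (q.2 : ℕ) = p.2 + 1 then 1 else 0 := by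
  obtain ⟨b, x⟩ := p
  obtain ⟨b', y⟩ := q
  by_cases hb : b = b'
  · subst hb
    simp [blockDiagonal'_apply_eq, jordanBlock_zero_apply]
  · simp [blockDiagonal'_apply_ne _ _ _ hb, hb]

end JordanBlock

section Diagonals

variable {l m : ℕ}

abbrev DiagonalIndex (l m : ℕ) : Type := Fin (m - l + 1) ⊕ (Fin (l - 1) × Fin 2)

def diagonalLength (l m : ℕ) : DiagonalIndex l m → ℕ :=
  Sum.elim (fun _ => l) (fun p => (p.1 : ℕ) + 1)

abbrev DiagonalPos (l m : ℕ) : Type := (b : DiagonalIndex l m) × Fin (diagonalLength l m b)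

/-- The offset `j - i` of a diagonal of the grid `Fin l × Fin m`: `inr (t, 0)` and `inr (t, 1)`
are the diagonals of length `t + 1` above and below the long ones. -/
def diagonalOffset (l m : ℕ) : DiagonalIndex l m → ℤ
  | .inl d => d
  | .inr (t, 0) => m - 1 - t
  | .inr (t, 1) => t + 1 - l

lemma diagonalOffset_injective (hlm : l ≤ m) : Function.Injective (diagonalOffset l m) := by
  rintro (⟨d, hd⟩ | ⟨⟨t, ht⟩, c⟩) (⟨d', hd'⟩ | ⟨⟨t', ht'⟩, c'⟩) h <;>
    (try fin_cases c) <;> (try fin_cases c') <;>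
    simp only [diagonalOffset, Sum.inl.injEq, Sum.inr.injEq, reduceCtorEq, Prod.mk.injEq,
      Fin.mk.injEq, and_true] at h ⊢ <;> omega

lemma diagonalOffset_bounds (hlm : l ≤ m) (b : DiagonalIndex l m) (x : ℕ)
    (hx : x < diagonalLength l m b) :
    x + (-diagonalOffset l m b).toNat < l ∧ x + (diagonalOffset l m b).toNat < m := by
  rcases b with ⟨d, hd⟩ | ⟨⟨t, ht⟩, c⟩
  · simp only [diagonalLength, diagonalOffset, Sum.elim_inl] at hx ⊢
    omega
  · fin_cases c <;> simp only [diagonalLength, diagonalOffset, Sum.elim_inr] at hx ⊢ <;> omega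

def diagonalPoint (hlm : l ≤ m) (p : DiagonalPos l m) : Fin l × Fin m :=
  (⟨p.2 + (-diagonalOffset l m p.1).toNat, (diagonalOffset_bounds hlm p.1 p.2 p.2.2).1⟩,
   ⟨p.2 + (diagonalOffset l m p.1).toNat, (diagonalOffset_bounds hlm p.1 p.2 p.2.2).2⟩)

lemma diagonalPoint_sub (hlm : l ≤ m) (p : DiagonalPos l m) :
    ((diagonalPoint hlm p).2 : ℤ) - (diagonalPoint hlm p).1 = diagonalOffset l m p.1 := by
  simp only [diagonalPoint]
  omega

lemma diagonalPoint_min (hlm : l ≤ m) (p : DiagonalPos l m) :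
    min ((diagonalPoint hlm p).1 : ℕ) (diagonalPoint hlm p).2 = p.2 := by
  simp only [diagonalPoint]
  omega

lemma diagonalPoint_injective (hlm : l ≤ m) : Function.Injective (diagonalPoint hlm) := by
  rintro ⟨b, x⟩ ⟨b', y⟩ h
  have hsub := diagonalPoint_sub hlm ⟨b, x⟩
  have hmin := diagonalPoint_min hlm ⟨b, x⟩
  rw [h, diagonalPoint_sub] at hsub
  rw [h, diagonalPoint_min] at hmin
  obtain rfl := diagonalOffset_injective hlm hsub
  obtain rfl := Fin.ext hmin
  rfl

lemma card_diagonalPos (hlm : l ≤ m) : Fintype.card (DiagonalPos l m) = l * m := by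
  have hgauss : (∑ t ∈ Finset.range (l - 1), (t + 1)) * 2 = (l - 1) * l := by
    rcases l with _ | l
    · simp
    · have := Finset.sum_range_id_mul_two (l + 1)
      rw [Finset.sum_range_succ'] at this
      simpa [mul_comm] using this
  simp only [Fintype.card_sigma, Fintype.card_fin]
  rw [Fintype.sum_sum_type, Fintype.sum_prod_type]
  simp only [diagonalLength, Sum.elim_inl, Sum.elim_inr, Finset.sum_const, Finset.card_univ,
    Fintype.card_fin, smul_eq_mul]
  rw [← Finset.mul_sum, Fin.sum_univ_eq_sum_range (fun t => t + 1)]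
  obtain ⟨d, rfl⟩ := Nat.exists_eq_add_of_le hlm
  rcases l with _ | l
  · simp
  · simp only [Nat.add_sub_cancel_left, Nat.add_sub_cancel] at hgauss ⊢
    linarith

lemma diagonalPoint_bijective (hlm : l ≤ m) : Function.Bijective (diagonalPoint hlm) :=
  (Fintype.bijective_iff_injective_and_card _).2
    ⟨diagonalPoint_injective hlm, by simp [card_diagonalPos hlm]⟩

lemma diagonalPoint_succ_iff (hlm : l ≤ m) (p q : DiagonalPos l m) :
    ((diagonalPoint hlm q).1 : ℕ) = (diagonalPoint hlm p).1 + 1 ∧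
        ((diagonalPoint hlm q).2 : ℕ) = (diagonalPoint hlm p).2 + 1 ↔
      p.1 = q.1 ∧ (q.2 : ℕ) = p.2 + 1 := by
  have hsub_p := diagonalPoint_sub hlm p
  have hsub_q := diagonalPoint_sub hlm q
  have hmin_p := diagonalPoint_min hlm p
  have hmin_q := diagonalPoint_min hlm q
  rw [← (diagonalOffset_injective hlm).eq_iff]
  -- a grid point is determined by its offset `j - i` and its position `min i j` on the diagonal
  omega

end Diagonals

theorem jordanBlock_zero_kronecker_similar {k : Type*} [Field k] {l m : ℕ} (hlm : l ≤ m) :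
    MatSimilar (jordanBlock (0 : k) l ⊗ₖ jordanBlock (0 : k) m)
      (blockDiagonal' fun b : DiagonalIndex l m => jordanBlock (0 : k) (diagonalLength l m b)) := by
  refine MatSimilar.of_apply_equiv (Equiv.ofBijective _ (diagonalPoint_bijective hlm))
    fun p q => ?_
  rw [Equiv.ofBijective_apply, Equiv.ofBijective_apply, jordanBlock_zero_kronecker_apply,
    blockDiagonal'_jordanBlock_zero_apply]
  exact if_congr (diagonalPoint_succ_iff hlm p q) rfl rfl

theorem stmt2_general {k : Type*} [Field k] (l m : ℕ) (hlm : l ≤ m) :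
    MatSimilar (jordanBlock (0 : k) l ⊗ₖ jordanBlock (0 : k) m)
      (Matrix.blockDiagonal'
        (fun i : Fin (m - l + 1) ⊕ (Fin (l - 1) × Fin 2) =>
          jordanBlock (0 : k) (Sum.elim (fun _ => l) (fun p => (p.1 : ℕ) + 1) i))) :=
  jordanBlock_zero_kronecker_similar hlm

theorem stmt2 {k : Type*} [Field k] (l m : ℕ) (hl : 0 < l) (hm : 0 < m) (hlm : l ≤ m) :
    MatSimilar (jordanBlock (0 : k) l ⊗ₖ jordanBlock (0 : k) m)
      (Matrix.blockDiagonal'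
        (fun i : Fin (m - l + 1) ⊕ (Fin (l - 1) × Fin 2) =>
          jordanBlock (0 : k) (Sum.elim (fun _ => l) (fun p => (p.1 : ℕ) + 1) i))) :=
  stmt2_general l m hlm
end

section
/- Let k be a field, let s and t be positive integers, and let f ∈ k[x] be an irreducible polynomial with f(0) ≠ 0. Then the k[x]-module k[x]/x^s ⊗ k[x]/f^t is isomorphic to the direct sum of t·deg(f) copies of k[x]/x^s. -/
/-!
Let `u` be the image of `x` in `B = k[x]/(f^t)`; it is a unit because `f(0) ≠ 0` makes `x` and
`f^t` coprime. The action of `x` on `k[x]/(x^s) ⊗ B` is multiplication by `x ⊗ u` in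
the tensor product algebra `B[x]/(x^s)`, and the algebra automorphism `x ↦ u⁻¹ x` carries it to
multiplication by `x ⊗ 1`. That operator is `N ⊗ id` with `N` the action of `x` on
`k[x]/(x^s)`, which is the direct sum of `dim B = t · deg f` copies of `N`.
-/

open Polynomial TensorProduct

/-- The `k`-linear operator on the `k[x]`-module `k[x]/(h)` given by the action of `x`,
i.e. multiplication by `x`. -/
noncomputable def mulXop (k : Type*) [Field k] (h : k[X]) :
    (k[X] ⧸ Ideal.span {h}) →ₗ[k] (k[X] ⧸ Ideal.span {h}) :=
  LinearMap.mulLeft k (Ideal.Quotient.mk (Ideal.span {h}) X)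

/-- Two `k[x]`-modules, presented as vector spaces equipped with the `k`-linear operator
by which `x` acts, are isomorphic iff there is a `k`-linear equivalence intertwining the
two operators. -/
def OpIso {k V W : Type*} [Field k] [AddCommGroup V] [Module k V]
    [AddCommGroup W] [Module k W] (f : V →ₗ[k] V) (g : W →ₗ[k] W) : Prop :=
  ∃ e : V ≃ₗ[k] W, ∀ v, e (f v) = g (e v)

/-- The direct sum of a family of operators, as an operator on the direct sum
(product) of the underlying spaces. -/
def piOp {k : Type*} [Field k] {ι : Type*} {V : ι → Type*} [∀ i, AddCommGroup (V i)]
    [∀ i, Module k (V i)] (f : ∀ i, V i →ₗ[k] V i) : (∀ i, V i) →ₗ[k] (∀ i, V i) :=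
  LinearMap.pi fun i => (f i).comp (LinearMap.proj i)

section OpIso

variable {k V W : Type*} [Field k] [AddCommGroup V] [Module k V] [AddCommGroup W] [Module k W]

lemma OpIso.trans {U : Type*} [AddCommGroup U] [Module k U] {f : V →ₗ[k] V} {g : W →ₗ[k] W}
    {h : U →ₗ[k] U} (hfg : OpIso f g) (hgh : OpIso g h) : OpIso f h := by
  obtain ⟨e₁, he₁⟩ := hfg
  obtain ⟨e₂, he₂⟩ := hgh
  exact ⟨e₁.trans e₂, fun v => by simp [he₁, he₂]⟩

lemma opIso_mulLeft_algEquiv {A A' : Type*} [Ring A] [Algebra k A] [Ring A'] [Algebra k A']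
    (e : A ≃ₐ[k] A') (a : A) : OpIso (LinearMap.mulLeft k a) (LinearMap.mulLeft k (e a)) :=
  ⟨e.toLinearEquiv, fun v => map_mul e a v⟩

lemma opIso_map_id_piOp {ι : Type*} [Fintype ι] (N : V →ₗ[k] V) (b : Module.Basis ι k W) :
    OpIso (TensorProduct.map N (LinearMap.id : W →ₗ[k] W)) (piOp fun _ : ι => N) := by
  classical
  refine ⟨(TensorProduct.congr (LinearEquiv.refl k V) b.equivFun).trans
    (TensorProduct.piScalarRight k k V ι), fun z => ?_⟩
  induction z using TensorProduct.induction_on with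
  | zero => simp
  | tmul v w => ext i; simp [piOp]
  | add x y hx hy => simp only [map_add, hx, hy]

end OpIso

namespace AdjoinRoot

variable {R B : Type*} [CommRing R] [CommRing B] [Algebra R B]

/-- The substitution `x ↦ b x` on `R[x]/(x^s) ⊗ B = B[x]/(x^s)`. -/
noncomputable def scaleRoot (s : ℕ) (b : B) :
    AdjoinRoot (X ^ s : R[X]) ⊗[R] B →ₐ[R] AdjoinRoot (X ^ s : R[X]) ⊗[R] B :=
  Algebra.TensorProduct.lift
    (liftAlgHom _ (Algebra.ofId R _) (root _ ⊗ₜ b) (by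
      simp [eval₂_X_pow, Algebra.TensorProduct.tmul_pow, ← mk_X, ← map_pow, mk_self]))
    Algebra.TensorProduct.includeRight (fun _ _ => Commute.all _ _)

@[simp]
lemma scaleRoot_root_tmul (s : ℕ) (b c : B) :
    scaleRoot s b (root (X ^ s : R[X]) ⊗ₜ c) = root _ ⊗ₜ (b * c) := by
  simp [scaleRoot, liftAlgHom_root]

lemma scaleRoot_comp (s : ℕ) (b c : B) :
    (scaleRoot (R := R) s b).comp (scaleRoot s c) = scaleRoot s (b * c) := by
  ext
  · simp
  · simp [scaleRoot]

lemma scaleRoot_one (s : ℕ) : scaleRoot (R := R) s (1 : B) = AlgHom.id R _ := by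
  ext
  · simp
  · simp [scaleRoot]

noncomputable def scaleRootEquiv (s : ℕ) (u : Bˣ) :
    AdjoinRoot (X ^ s : R[X]) ⊗[R] B ≃ₐ[R] AdjoinRoot (X ^ s : R[X]) ⊗[R] B :=
  AlgEquiv.ofAlgHom (scaleRoot s ↑u) (scaleRoot s ↑u⁻¹)
    (by rw [scaleRoot_comp, Units.mul_inv, scaleRoot_one])
    (by rw [scaleRoot_comp, Units.inv_mul, scaleRoot_one])

@[simp]
lemma scaleRootEquiv_apply (s : ℕ) (u : Bˣ) (z : AdjoinRoot (X ^ s : R[X]) ⊗[R] B) :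
    scaleRootEquiv s u z = scaleRoot s ↑u z := rfl

end AdjoinRoot

open AdjoinRoot in
lemma opIso_map_mulLeft_root_unit {k B : Type*} [Field k] [CommRing B] [Algebra k B] (s : ℕ)
    (u : Bˣ) :
    OpIso (TensorProduct.map (LinearMap.mulLeft k (root (X ^ s : k[X])))
        (LinearMap.mulLeft k (u : B)))
      (TensorProduct.map (LinearMap.mulLeft k (root (X ^ s : k[X])))
        (LinearMap.id : B →ₗ[k] B)) := by
  have h := opIso_mulLeft_algEquiv (scaleRootEquiv s u⁻¹) (root (X ^ s : k[X]) ⊗ₜ[k] (u : B))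
  rwa [scaleRootEquiv_apply, scaleRoot_root_tmul, Units.inv_mul, LinearMap.mulLeft_tmul,
    LinearMap.mulLeft_tmul, LinearMap.mulLeft_one] at h

lemma Ideal.Quotient.isUnit_mk_of_isCoprime {R : Type*} [CommRing R] {a b : R}
    (h : IsCoprime a b) : IsUnit (Ideal.Quotient.mk (Ideal.span {b}) a) := by
  obtain ⟨c, d, hcd⟩ := h
  refine IsUnit.of_mul_eq_one (Ideal.Quotient.mk _ c) ?_
  rw [← map_mul, mul_comm a c, ← map_one (Ideal.Quotient.mk _), Ideal.Quotient.eq,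
    Ideal.mem_span_singleton, ← hcd, sub_add_cancel_left]
  exact (dvd_mul_left b d).neg_right

lemma Polynomial.isCoprime_X_of_eval_zero_ne_zero {K : Type*} [Field K] {f : K[X]}
    (hf : f.eval 0 ≠ 0) : IsCoprime X f :=
  irreducible_X.coprime_iff_not_dvd.mpr (by rwa [X_dvd_iff, coeff_zero_eq_eval_zero])

theorem stmt4_general {k : Type*} [Field k] (s t : ℕ) (f : k[X]) (hf0 : f.eval 0 ≠ 0) :
    OpIso (TensorProduct.map (mulXop k (X ^ s)) (mulXop k (f ^ t)))
      (piOp fun _ : Fin (t * f.natDegree) => mulXop k (X ^ s)) := by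
  obtain ⟨u, hu⟩ := Ideal.Quotient.isUnit_mk_of_isCoprime
    ((isCoprime_X_of_eval_zero_ne_zero hf0).pow_right (n := t))
  have hf : f ≠ 0 := by rintro rfl; simp at hf0
  let b := (AdjoinRoot.powerBasis (pow_ne_zero t hf)).basis.reindex (finCongr (natDegree_pow f t))
  have htwist := opIso_map_mulLeft_root_unit (k := k) s u
  rw [hu] at htwist
  exact htwist.trans (opIso_map_id_piOp _ b)

theorem stmt4 {k : Type*} [Field k] (s t : ℕ) (hs : 0 < s) (ht : 0 < t)
    (f : k[X]) (hf : Irreducible f) (hf0 : f.eval 0 ≠ 0) :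
    OpIso (TensorProduct.map (mulXop k (X ^ s)) (mulXop k (f ^ t)))
      (piOp fun _ : Fin (t * f.natDegree) => mulXop k (X ^ s)) :=
  stmt4_general s t f hf0
end

section
/- Let k be a perfect field, let s be a positive integer, and let f ∈ k[x] be an irreducible polynomial with f(0) ≠ 0. Then the k[x]-modules k[x]/f^s and k[x]/(x−1)^s ⊗ k[x]/f are isomorphic. -/
/-! Let `T = k[x]/(x-1)^s ⊗ k[x]/f` and `t = x ⊗ x`, so that the right-hand module is `T` with `x`
acting by multiplication by `t`. Since `dim T = s · deg f`, it suffices that the kernel of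
`p ↦ p(t)` is `(f^s)`, i.e. that `f(t)` is nilpotent of order exactly `s`. Over the field
`K = k[x]/f` with root `α = x̄ ≠ 0` write `f = (X - α) g`; separability gives `g(α) ≠ 0`. In
`K ⊗ k[x]/(x-1)^s` the element `α ⊗ x` is `α + ν` with `ν = α ⊗ (x - 1)`, which is nilpotent of
order exactly `s` because `α ≠ 0` (that is, `f(0) ≠ 0`); hence
`f(α ⊗ x)^(s-1) = g(α)^(s-1) ν^(s-1) ≠ 0` while `f(α ⊗ x)^s = 0`. -/

open Polynomial TensorProduct

theorem RingHom.ker_eq_span_pow_of_pow_ne_zero {R S F : Type*} [CommRing R] [IsDomain R]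
    [IsPrincipalIdealRing R] [Semiring S] [FunLike F R S] [RingHomClass F R S] (φ : F)
    {p : R} (hp : Prime p) {m : ℕ} (hzero : φ p ^ (m + 1) = 0) (hne : φ p ^ m ≠ 0) :
    RingHom.ker φ = Ideal.span {p ^ (m + 1)} := by
  obtain ⟨q, hq⟩ := (IsPrincipalIdealRing.principal (RingHom.ker φ)).principal
  rw [Ideal.submodule_span_eq] at hq
  have hmem {r : R} : φ r = 0 ↔ q ∣ r := by
    rw [← RingHom.mem_ker, hq, Ideal.mem_span_singleton]
  obtain ⟨i, hi, hqi⟩ := (dvd_prime_pow hp _).mp (hmem.mp (by rwa [map_pow]))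
  obtain rfl : i = m + 1 := by
    by_contra hne'
    exact hne (by rw [← map_pow, hmem]; exact hqi.dvd.trans (pow_dvd_pow p (by omega)))
  rw [hq, Ideal.span_singleton_eq_span_singleton.mpr hqi]

theorem Ideal.Quotient.mk_pow_ne_zero_of_span_pow_succ {R : Type*} [CommRing R] [IsDomain R]
    {p : R} (hp0 : p ≠ 0) (hp : ¬IsUnit p) (m : ℕ) :
    Ideal.Quotient.mk (Ideal.span {p ^ (m + 1)}) p ^ m ≠ 0 := by
  rw [← map_pow, Ne, Ideal.Quotient.eq_zero_iff_mem, Ideal.mem_span_singleton,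
    pow_dvd_pow_iff hp0 hp]
  omega

theorem Ideal.Quotient.mk_X_ne_zero {k : Type*} [Field k] {f : k[X]} (hf : Irreducible f)
    (hf0 : f.eval 0 ≠ 0) : Ideal.Quotient.mk (Ideal.span {f}) X ≠ 0 := by
  rw [Ne, Ideal.Quotient.eq_zero_iff_mem, Ideal.mem_span_singleton]
  intro hdvd
  apply hf0
  rw [← coeff_zero_eq_eval_zero, ← X_dvd_iff]
  exact hf.dvd_symm irreducible_X hdvd

theorem opIso_mulXop_mulLeft {k T : Type*} [Field k] [CommRing T] [Algebra k T]
    [Module.Finite k T] {h : k[X]} {t : T} (hker : RingHom.ker (aeval t) = Ideal.span {h})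
    (hdim : Module.finrank k T = h.natDegree) :
    OpIso (mulXop k h) (LinearMap.mulLeft k t) := by
  let φ := Ideal.Quotient.liftₐ (Ideal.span {h}) (aeval t) fun p hp ↦ by
    rwa [← hker, RingHom.mem_ker] at hp
  have hinj : Function.Injective φ := by
    rw [injective_iff_map_eq_zero]
    intro v hv
    obtain ⟨p, rfl⟩ := Ideal.Quotient.mk_surjective v
    rwa [Ideal.Quotient.eq_zero_iff_mem, ← hker, RingHom.mem_ker]
  have : Module.Finite k (k[X] ⧸ Ideal.span {h}) :=
    Module.Finite.of_injective φ.toLinearMap hinj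
  have hsurj : Function.Surjective φ :=
    (LinearMap.injective_iff_surjective_of_finrank_eq_finrank (f := φ.toLinearMap)
      (finrank_quotient_span_eq_natDegree.trans hdim.symm)).mp hinj
  refine ⟨LinearEquiv.ofBijective φ.toLinearMap ⟨hinj, hsurj⟩, fun v ↦ ?_⟩
  change φ (Ideal.Quotient.mk _ X * v) = t * φ v
  rw [map_mul]
  congr 1
  exact aeval_X t

theorem aeval_pow_eq_of_pow_succ_eq_zero {K T : Type*} [CommRing K] [CommRing T]
    [Algebra K T] {p g : K[X]} {α : K} (hp : p = (X - C α) * g) {τ : T} {m : ℕ}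
    (hν : (τ - algebraMap K T α) ^ (m + 1) = 0) :
    aeval τ p ^ m = algebraMap K T (g.eval α) ^ m * (τ - algebraMap K T α) ^ m := by
  set ν := τ - algebraMap K T α
  have hfac : aeval τ p = ν * aeval τ g := by simp [hp, ν]
  obtain ⟨w, hw⟩ : ν ∣ aeval τ g ^ m - algebraMap K T (g.eval α) ^ m := by
    refine dvd_trans ?_ (sub_dvd_pow_sub_pow _ _ m)
    simpa only [eval_map_algebraMap, ← aeval_algebraMap_apply_eq_algebraMap_eval] using
      sub_dvd_eval_sub τ (algebraMap K T α) (g.map (algebraMap K T))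
  rw [hfac, mul_pow]
  linear_combination ν ^ m * hw + w * hν

section TensorNilpotent

variable {k K A : Type*} [CommRing A]

theorem tmul_sub_algebraMap [CommRing k] [CommRing K] [Algebra k K] [Algebra k A]
    (α : K) (u : A) : α ⊗ₜ[k] u - algebraMap K (K ⊗[k] A) α = α ⊗ₜ[k] (u - 1) := by
  rw [Algebra.TensorProduct.algebraMap_apply, Algebra.algebraMap_self, RingHom.id_apply,
    tmul_sub]

theorem aeval_tmul_pow_succ_eq_zero [CommRing k] [CommRing K] [Algebra k K] [Algebra k A]
    {f : k[X]} {α : K} (hα : aeval α f = 0) {u : A} {m : ℕ} (hu : (u - 1) ^ (m + 1) = 0) :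
    aeval (α ⊗ₜ[k] u) f ^ (m + 1) = 0 := by
  obtain ⟨g, hg⟩ : X - C α ∣ f.map (algebraMap k K) :=
    dvd_iff_isRoot.mpr (by rwa [IsRoot, eval_map_algebraMap])
  rw [← aeval_map_algebraMap K, hg, map_mul, mul_pow, map_sub, aeval_X, aeval_C,
    tmul_sub_algebraMap, Algebra.TensorProduct.tmul_pow, hu, tmul_zero, zero_mul]

theorem aeval_tmul_pow_ne_zero [Field k] [Field K] [Algebra k K] [Algebra k A]
    {f : k[X]} (hsep : f.Separable) {α : K} (hα0 : α ≠ 0) (hα : aeval α f = 0)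
    {u : A} {m : ℕ} (hu : (u - 1) ^ (m + 1) = 0) (hu' : (u - 1) ^ m ≠ 0) :
    aeval (α ⊗ₜ[k] u) f ^ m ≠ 0 := by
  obtain ⟨g, hg⟩ : X - C α ∣ f.map (algebraMap k K) :=
    dvd_iff_isRoot.mpr (by rwa [IsRoot, eval_map_algebraMap])
  have hgα : g.eval α ≠ 0 := by
    intro h0
    obtain ⟨g', hg'⟩ := dvd_iff_isRoot.mpr h0
    exact not_isUnit_X_sub_C α (hsep.map.squarefree _ ⟨g', by rw [hg, hg']; ring⟩)
  have hpow := aeval_pow_eq_of_pow_succ_eq_zero hg (τ := α ⊗ₜ[k] u)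
    (by rw [tmul_sub_algebraMap, Algebra.TensorProduct.tmul_pow, hu, tmul_zero])
  rw [aeval_map_algebraMap, tmul_sub_algebraMap, ← map_pow (algebraMap K _),
    ← Algebra.smul_def, Algebra.TensorProduct.tmul_pow, ← mul_one (α ^ m), ← smul_eq_mul,
    ← smul_tmul'] at hpow
  rw [hpow]
  refine smul_ne_zero (pow_ne_zero _ hgα) (smul_ne_zero (pow_ne_zero _ hα0) ?_)
  rwa [Ne, Module.FaithfullyFlat.one_tmul_eq_zero_iff]

end TensorNilpotent

theorem Algebra.TensorProduct.aeval_tmul_comm {R A B : Type*} [CommSemiring R] [CommSemiring A]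
    [CommSemiring B] [Algebra R A] [Algebra R B] (p : R[X]) (a : A) (b : B) :
    aeval (a ⊗ₜ[R] b) p = Algebra.TensorProduct.comm R B A (aeval (b ⊗ₜ[R] a) p) := by
  rw [← aeval_algHom_apply, Algebra.TensorProduct.comm_tmul]

theorem stmt5 {k : Type*} [Field k] [PerfectField k] (s : ℕ) (hs : 0 < s)
    (f : k[X]) (hf : Irreducible f) (hf0 : f.eval 0 ≠ 0) :
    OpIso (mulXop k (f ^ s))
      (TensorProduct.map (mulXop k ((X - 1) ^ s)) (mulXop k f)) := by
  obtain ⟨m, rfl⟩ : ∃ m, s = m + 1 := ⟨s - 1, by omega⟩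
  have : (Ideal.span {f}).IsMaximal := PrincipalIdealRing.isMaximal_of_irreducible hf
  let _ := Ideal.Quotient.field (Ideal.span {f})
  let A := k[X] ⧸ Ideal.span {(X - 1 : k[X]) ^ (m + 1)}
  let K := k[X] ⧸ Ideal.span {f}
  let u : A := Ideal.Quotient.mk _ X
  let α : K := Ideal.Quotient.mk _ X
  have hu1 : u - 1 = Ideal.Quotient.mk _ (X - C 1) := by rw [C_1, map_sub, map_one]
  have hu : (u - 1) ^ (m + 1) = 0 := by
    rw [hu1, ← map_pow, Ideal.Quotient.eq_zero_iff_mem, C_1]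
    exact Ideal.mem_span_singleton_self _
  have hu' : (u - 1) ^ m ≠ 0 := by
    rw [hu1]
    exact Ideal.Quotient.mk_pow_ne_zero_of_span_pow_succ (X_sub_C_ne_zero 1)
      (not_isUnit_X_sub_C 1) m
  have hα : aeval α f = 0 := AdjoinRoot.eval₂_root f
  have hker : RingHom.ker (aeval (u ⊗ₜ[k] α)) = Ideal.span {f ^ (m + 1)} := by
    refine RingHom.ker_eq_span_pow_of_pow_ne_zero _ hf.prime ?_ ?_
    · rw [Algebra.TensorProduct.aeval_tmul_comm, ← map_pow,
        aeval_tmul_pow_succ_eq_zero hα hu, map_zero]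
    · rw [Algebra.TensorProduct.aeval_tmul_comm, ← map_pow,
        map_ne_zero_iff _ (AlgEquiv.injective _)]
      exact aeval_tmul_pow_ne_zero (PerfectField.separable_of_irreducible hf)
        (Ideal.Quotient.mk_X_ne_zero hf hf0) hα hu hu'
  have hdimA : Module.finrank k A = m + 1 := by
    rw [finrank_quotient_span_eq_natDegree, ← C_1, natDegree_pow, natDegree_X_sub_C, mul_one]
  have hdimK : Module.finrank k K = f.natDegree := finrank_quotient_span_eq_natDegree
  have : Module.Finite k A := Module.finite_of_finrank_pos (by omega)
  have : Module.Finite k K := Module.finite_of_finrank_pos (hdimK ▸ hf.natDegree_pos)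
  change OpIso _ (TensorProduct.map (LinearMap.mulLeft k u) (LinearMap.mulLeft k α))
  rw [← LinearMap.mulLeft_tmul u α]
  refine opIso_mulXop_mulLeft (T := A ⊗[k] K) hker ?_
  rw [Module.finrank_tensorProduct, hdimA, hdimK, natDegree_pow, mul_comm]
end

section
/- Let k be a perfect field and let f, g ∈ k[x] be monic irreducible polynomials with f(0) ≠ 0 ≠ g(0). Let E be a splitting field of f·g over k, let B ⊆ E and C ⊆ E be the splitting fields of f and g inside E, let Λ ⊆ B and M ⊆ C be the sets of zeros of f and g, and assume B ∩ C = k. Fix zeros λ ∈ Λ of f and μ ∈ M of g, and set l = (deg f · deg g)/deg m_k(λμ), where m_k(λμ) is the minimal polynomial of λμ over k. Then: (i) ∏_{(α,β) ∈ Λ×M} (x − αβ) = m_k(λμ)^l; (ii) l divides deg f and l divides deg g; (iii) k contains l distinct l-th roots of unity; in particular, l is not a multiple of the characteristic of k. -/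
/-!
The Galois group of `E/k` acts transitively on `Λ × M`: it is transitive on `Λ`, and since
`B ⊓ C = ⊥` the automorphisms fixing `B` still induce all of `Gal(C/k)`. Hence the multiset of
products `αβ` is Galois-stable and consists of conjugates of `λμ`, so it is `c` copies of the
roots of `m_k(λμ)`, where `c` is the number of pairs `(α, β)` with `αβ = λμ`; comparing degrees
gives `c = l`. These pairs are exactly `(uλ, u⁻¹μ)` with `u = α/λ ∈ B ⊓ C = k`, i.e. `u` runs over
the group `H ≤ kˣ` of scalars stabilising both `Λ` and `M`. Thus `l = |H|`; `H` acts freely on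
`Λ` and on `M` (as `0 ∉ Λ ∪ M`), so `l` divides `deg f` and `deg g`, and as a finite subgroup of
`kˣ` it consists of `l`-th roots of unity and has no element of order `char k`.
-/

open Polynomial IntermediateField Pointwise

theorem Multiset.map_prodMap_product {α β γ δ : Type*} (φ : α → β) (ψ : γ → δ)
    (s : Multiset α) (t : Multiset γ) :
    (s ×ˢ t).map (Prod.map φ ψ) = s.map φ ×ˢ t.map ψ := by
  induction s using Multiset.induction_on with
  | empty => simp
  | cons a s ih => simp [Multiset.cons_product, ih, Multiset.map_map]

theorem Multiset.count_map_eq_natCard {α β : Type*} [DecidableEq β] {s : Multiset α}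
    (hs : s.Nodup) (F : α → β) (b : β) :
    (s.map F).count b = Nat.card {a | a ∈ s ∧ F a = b} := by
  classical
  rw [Multiset.count_map, ← Multiset.toFinset_card_of_nodup (hs.filter _),
    ← Nat.card_eq_finsetCard]
  congr; ext a; simp [eq_comm]

theorem MulAction.natCard_dvd_natCard_of_stabilizer_eq_bot {G α : Type*} [Group G]
    [MulAction G α] (h : ∀ a : α, stabilizer G a = ⊥) : Nat.card G ∣ Nat.card α := by
  rw [Nat.card_congr (selfEquivOrbitsQuotientProd h), Nat.card_prod]
  exact dvd_mul_left _ _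

theorem Subgroup.exists_finset_card_eq_natCard_and_pow_natCard_eq_one {M : Type*} [Monoid M]
    (H : Subgroup Mˣ) [Finite H] :
    ∃ S : Finset M, S.card = Nat.card H ∧ ∀ a ∈ S, a ^ Nat.card H = 1 := by
  have := Fintype.ofFinite H
  refine ⟨Finset.univ.map ⟨fun u : H => ((u : Mˣ) : M),
    Units.val_injective.comp Subtype.val_injective⟩, by simp [Nat.card_eq_fintype_card], ?_⟩
  simp only [Finset.mem_map, Finset.mem_univ, true_and]
  rintro _ ⟨u, rfl⟩
  show ((u : Mˣ) : M) ^ _ = 1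
  rw [← Units.val_pow_eq_pow_val, ← Subgroup.coe_pow, pow_card_eq_one', Subgroup.coe_one,
    Units.val_one]

theorem Subgroup.not_dvd_natCard_of_charP {K : Type*} [Field K] (p : ℕ) [hp : Fact p.Prime]
    [CharP K p] (H : Subgroup Kˣ) [Finite H] : ¬ p ∣ Nat.card H := by
  intro hdvd
  obtain ⟨u, hu⟩ := exists_prime_orderOf_dvd_card' p hdvd
  have hu1 : ((u : Kˣ) : K) = 1 := by
    apply frobenius_inj K p
    rw [frobenius_def, map_one, ← Units.val_pow_eq_pow_val, ← Subgroup.coe_pow, ← hu,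
      pow_orderOf_eq_one, Subgroup.coe_one, Units.val_one]
  rw [show u = 1 from Subtype.ext (Units.ext hu1), orderOf_one] at hu
  exact hp.out.one_lt.ne hu

section Galois

variable {F E : Type*} [Field F] [Field E] [Algebra F E]

theorem exists_algEquiv_fixing_eqOn [FiniteDimensional F E] [IsGalois F E]
    {K L : IntermediateField F E} [Normal F K] (h : K ⊓ L = ⊥) (σ : Gal(E/F)) :
    ∃ τ : Gal(E/F), (∀ x ∈ L, τ x = x) ∧ ∀ x ∈ K, τ x = σ x := by
  obtain ⟨τ, hτ⟩ := restrictRestrictAlgEquivMapHom_surjective K L h (σ.restrictNormal K)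
  refine ⟨τ.restrictScalars F, fun x hx => τ.commutes ⟨x, hx⟩, fun x hx => ?_⟩
  have hτx : τ x = σ.restrictNormal K ⟨x, hx⟩ := by
    simpa using congrArg (fun ρ => (ρ ⟨x, hx⟩ : E)) hτ
  exact hτx.trans (σ.restrictNormal_commutes K ⟨x, hx⟩)

theorem exists_algEquiv_apply_eq_and_apply_eq [FiniteDimensional F E] [IsGalois F E]
    {K L : IntermediateField F E} [Normal F K] (h : K ⊓ L = ⊥) {x x' y y' : E}
    (hx : IsConjRoot F x x') (hx' : x' ∈ L) (hy : IsConjRoot F y y') (hyK : y ∈ K) :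
    ∃ σ : Gal(E/F), σ x = x' ∧ σ y = y' := by
  obtain ⟨σ, hσ⟩ := hx.symm.exists_algEquiv
  obtain ⟨ρ, hρ⟩ := hy.symm.exists_algEquiv
  obtain ⟨τ, hτL, hτK⟩ := exists_algEquiv_fixing_eqOn h (ρ * σ⁻¹)
  have hσy : σ y ∈ K := by
    have := σ.restrictNormal_commutes K ⟨y, hyK⟩
    exact this ▸ SetLike.coe_mem _
  refine ⟨τ * σ, ?_, ?_⟩
  · simp [hσ, hτL _ hx']
  · simp [hτK _ hσy, hρ]

theorem eq_count_nsmul_aroots_minpoly [Normal F E] [DecidableEq E] {P : Multiset E} {x : E}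
    (hx : IsSeparable F x) (hinv : ∀ σ : Gal(E/F), P.map σ = P)
    (hconj : ∀ y ∈ P, IsConjRoot F x y) :
    P = P.count x • (minpoly F x).aroots E := by
  have hint : IsIntegral F x := hx.isIntegral
  ext y
  rw [Multiset.count_nsmul]
  by_cases hy : IsConjRoot F x y
  · rw [Multiset.count_eq_one_of_mem (nodup_roots (Separable.map hx))
      ((isConjRoot_iff_mem_minpoly_aroots hint).1 hy), mul_one]
    obtain ⟨σ, rfl⟩ := hy.symm.exists_algEquiv
    conv_lhs => rw [← hinv σ]
    exact Multiset.count_map_eq_count' σ P σ.injective x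
  · rw [Multiset.count_eq_zero.2 (mt (hconj y) hy),
      Multiset.count_eq_zero.2 (mt (isConjRoot_iff_mem_minpoly_aroots hint).2 hy), mul_zero]

end Galois

namespace Polynomial

variable {k E : Type*} [Field k] [Field E] [Algebra k E] {f g : k[X]}

theorem map_aroots_algEquiv (hf : (f.map (algebraMap k E)).Splits) (σ : E ≃ₐ[k] E) :
    (f.aroots E).map σ = f.aroots E := by
  have := hf.roots_map_of_injective (i := (σ : E →+* E)) σ.injective
  rw [map_map, ← AlgEquiv.toAlgHom_toRingHom, AlgHom.comp_algebraMap] at this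
  exact this.symm

theorem card_aroots_eq_natDegree (hf : (f.map (algebraMap k E)).Splits) :
    Multiset.card (f.aroots E) = f.natDegree := by
  rw [aroots_def, ← hf.natDegree_eq_card_roots, natDegree_map]

theorem isConjRoot_of_mem_rootSet (hf : Irreducible f) {x y : E} (hx : x ∈ f.rootSet E)
    (hy : y ∈ f.rootSet E) : IsConjRoot k x y := by
  rw [isConjRoot_def, ← minpoly.eq_of_irreducible hf (mem_rootSet.1 hx).2,
    ← minpoly.eq_of_irreducible hf (mem_rootSet.1 hy).2]

theorem ne_zero_of_mem_rootSet_of_eval_zero_ne_zero (hf0 : f.eval 0 ≠ 0) {x : E}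
    (hx : x ∈ f.rootSet E) : x ≠ 0 := by
  rintro rfl
  apply hf0
  rw [← coeff_zero_eq_eval_zero]
  apply (algebraMap k E).injective
  rw [coeff_zero_eq_aeval_zero', aeval_eq_zero_of_mem_rootSet hx, map_zero]

theorem smul_rootSet_eq_of_smul_mem [Normal k E] (hf : Irreducible f) {x : E}
    (hx : x ∈ f.rootSet E) {u : kˣ} (hu : u • x ∈ f.rootSet E) :
    u • f.rootSet E = f.rootSet E := by
  refine Set.eq_of_subset_of_ncard_le ?_ (Set.ncard_smul_set u _).ge (f.rootSet E).toFinite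
  rintro _ ⟨y, hy, rfl⟩
  obtain ⟨σ, rfl⟩ := (isConjRoot_of_mem_rootSet hf hy hx).exists_algEquiv
  simpa [Units.smul_def] using rootSet_mapsTo σ.toAlgHom hu

theorem natCard_dvd_natDegree_of_le_stabilizer {H : Subgroup kˣ}
    (hH : H ≤ MulAction.stabilizer kˣ (f.rootSet E)) (hf : f.Separable)
    (hsplit : (f.map (algebraMap k E)).Splits) (hf0 : f.eval 0 ≠ 0) :
    Nat.card H ∣ f.natDegree := by
  let S : SubMulAction H E :=
    { carrier := f.rootSet E
      smul_mem' u x hx := by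
        rw [← MulAction.mem_stabilizer_iff.1 (hH u.2)]
        exact Set.smul_mem_smul_set hx }
  have hfree (x : S) : MulAction.stabilizer H x = ⊥ := by
    rw [S.stabilizer_of_subMul, Subgroup.eq_bot_iff_forall]
    intro u hu
    have hx0 : (x : E) ≠ 0 := ne_zero_of_mem_rootSet_of_eval_zero_ne_zero hf0 x.2
    have hu' : (u : kˣ) ∈ MulAction.stabilizer kˣ (x : E) := hu
    rw [Module.stabilizer_units_eq_bot_of_ne_zero k hx0, Subgroup.mem_bot] at hu'
    exact Subtype.ext hu'
  rw [← card_rootSet_eq_natDegree hf hsplit, ← Nat.card_eq_fintype_card]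
  exact (MulAction.natCard_dvd_natCard_of_stabilizer_eq_bot hfree : Nat.card H ∣ Nat.card S)

theorem natCard_stabilizer_inf_stabilizer [Normal k E] (hf : Irreducible f)
    (hg : Irreducible g) (hdisj : adjoin k (f.rootSet E) ⊓ adjoin k (g.rootSet E) = ⊥)
    {lam mu : E} (hlam : lam ∈ f.rootSet E) (hmu : mu ∈ g.rootSet E) (hlam0 : lam ≠ 0)
    (hmu0 : mu ≠ 0) :
    Nat.card ↥(MulAction.stabilizer kˣ (f.rootSet E) ⊓ MulAction.stabilizer kˣ (g.rootSet E)) =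
      Nat.card {q : E × E | q.1 ∈ f.rootSet E ∧ q.2 ∈ g.rootSet E ∧ q.1 * q.2 = lam * mu} := by
  have hmem {s : Set E} {u : kˣ} (hu : u ∈ MulAction.stabilizer kˣ s) {x : E} (hx : x ∈ s) :
      u • x ∈ s := MulAction.mem_stabilizer_iff.1 hu ▸ Set.smul_mem_smul_set hx
  refine Nat.card_congr (Equiv.ofBijective
    (fun u => ⟨((u : kˣ) • lam, (u : kˣ)⁻¹ • mu), hmem u.2.1 hlam, hmem (inv_mem u.2.2) hmu,
      by simp [Units.smul_def]⟩) ⟨fun u v huv => ?_, ?_⟩)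
  · have h : (u : kˣ) • lam = (v : kˣ) • lam := congrArg (fun q => q.1.1) huv
    exact Subtype.ext (Units.ext (smul_left_injective k hlam0 h))
  · rintro ⟨⟨α, β⟩, hα, hβ, hαβ⟩
    have hα0 : α ≠ 0 := by rintro rfl; simp [hlam0, hmu0, eq_comm] at hαβ
    have hβ0 : β ≠ 0 := by rintro rfl; simp [hlam0, hmu0, eq_comm] at hαβ
    have hratio : α * lam⁻¹ = mu * β⁻¹ := by field_simp; linear_combination hαβ
    have hk : α * lam⁻¹ ∈ (⊥ : IntermediateField k E) := by
      rw [← hdisj]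
      exact ⟨mul_mem (subset_adjoin k _ hα) (inv_mem (subset_adjoin k _ hlam)),
        hratio ▸ mul_mem (subset_adjoin k _ hmu) (inv_mem (subset_adjoin k _ hβ))⟩
    obtain ⟨a, ha⟩ := mem_bot.1 hk
    have ha0 : a ≠ 0 := by rintro rfl; simp [hα0, hlam0, eq_comm] at ha
    have hulam : Units.mk0 a ha0 • lam = α := by
      simp [Units.smul_def, Algebra.smul_def, ha, hlam0]
    have humu : (Units.mk0 a ha0)⁻¹ • mu = β := by
      simp [Units.smul_def, Algebra.smul_def, ha, hratio, hmu0]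
    exact ⟨⟨Units.mk0 a ha0, smul_rootSet_eq_of_smul_mem hf hlam (hulam ▸ hα),
      (MulAction.stabilizer kˣ (g.rootSet E)).inv_mem_iff.1
        (smul_rootSet_eq_of_smul_mem hg hmu (humu ▸ hβ))⟩,
      Subtype.ext (Prod.ext hulam humu)⟩

theorem aroots_product_map_mul_eq_nsmul [FiniteDimensional k E] [IsGalois k E] (hf : Irreducible f)
    (hg : Irreducible g) (hfsep : f.Separable) (hgsep : g.Separable)
    (hfs : (f.map (algebraMap k E)).Splits) (hgs : (g.map (algebraMap k E)).Splits)
    (hdisj : adjoin k (f.rootSet E) ⊓ adjoin k (g.rootSet E) = ⊥)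
    {lam mu : E} (hlam : lam ∈ f.rootSet E) (hmu : mu ∈ g.rootSet E) (hlam0 : lam ≠ 0)
    (hmu0 : mu ≠ 0) :
    (f.aroots E ×ˢ g.aroots E).map (fun q => q.1 * q.2) =
      Nat.card ↥(MulAction.stabilizer kˣ (f.rootSet E) ⊓ MulAction.stabilizer kˣ (g.rootSet E)) •
        (minpoly k (lam * mu)).aroots E := by
  classical
  have hrootSet {p : k[X]} {x : E} : x ∈ p.aroots E ↔ x ∈ p.rootSet E := by
    rw [mem_aroots', mem_rootSet']
  have : Normal k (adjoin k (g.rootSet E)) :=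
    have := adjoin_rootSet_isSplittingField hgs
    Normal.of_isSplittingField g
  have hinv (σ : Gal(E/k)) :
      ((f.aroots E ×ˢ g.aroots E).map (fun q => q.1 * q.2)).map σ =
        (f.aroots E ×ˢ g.aroots E).map (fun q => q.1 * q.2) := by
    have hcomp : (σ ∘ fun q : E × E => q.1 * q.2) = (fun q => q.1 * q.2) ∘ Prod.map σ σ := by
      ext; simp
    rw [Multiset.map_map, hcomp, ← Multiset.map_map, Multiset.map_prodMap_product,
      map_aroots_algEquiv hfs, map_aroots_algEquiv hgs]
  have hconj : ∀ y ∈ (f.aroots E ×ˢ g.aroots E).map (fun q => q.1 * q.2),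
      IsConjRoot k (lam * mu) y := by
    simp only [Multiset.mem_map, Multiset.mem_product]
    rintro _ ⟨⟨α, β⟩, ⟨hα, hβ⟩, rfl⟩
    obtain ⟨σ, rfl, rfl⟩ := exists_algEquiv_apply_eq_and_apply_eq ((inf_comm _ _).trans hdisj)
      (isConjRoot_of_mem_rootSet hf hlam (hrootSet.1 hα)) (subset_adjoin k _ (hrootSet.1 hα))
      (isConjRoot_of_mem_rootSet hg hmu (hrootSet.1 hβ)) (subset_adjoin k _ hmu)
    rw [← map_mul]
    exact isConjRoot_of_algEquiv _ σ
  rw [eq_count_nsmul_aroots_minpoly (Algebra.IsSeparable.isSeparable k _) hinv hconj,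
    Multiset.count_map_eq_natCard ((nodup_roots hfsep.map).product (nodup_roots hgsep.map)),
    natCard_stabilizer_inf_stabilizer hf hg hdisj hlam hmu hlam0 hmu0]
  congr
  ext q
  simp [Multiset.mem_product, hrootSet, and_assoc]

end Polynomial

theorem stmt14_general {k E : Type*} [Field k] [PerfectField k] [Field E] [Algebra k E]
    (f g : k[X]) (hf : Irreducible f) (hg : Irreducible g)
    (hf0 : f.eval 0 ≠ 0) (hg0 : g.eval 0 ≠ 0)
    [Polynomial.IsSplittingField k E (f * g)]
    (B C : IntermediateField k E)
    (hB : B = IntermediateField.adjoin k (f.rootSet E))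
    (hC : C = IntermediateField.adjoin k (g.rootSet E))
    (hBC : B ⊓ C = ⊥)
    (lam mu : E) (hlam : lam ∈ f.rootSet E) (hmu : mu ∈ g.rootSet E)
    (l : ℕ) (hl : l = f.natDegree * g.natDegree / (minpoly k (lam * mu)).natDegree) :
    ((f.aroots E ×ˢ g.aroots E).map fun q : E × E => X - Polynomial.C (q.1 * q.2)).prod =
        ((minpoly k (lam * mu)).map (algebraMap k E)) ^ l ∧
      l ∣ f.natDegree ∧ l ∣ g.natDegree ∧
      (∃ S : Finset k, S.card = l ∧ ∀ a ∈ S, a ^ l = 1) ∧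
      ∀ q : ℕ, q.Prime → CharP k q → ¬ q ∣ l := by
  subst hB hC hl
  have hfsep := PerfectField.separable_of_irreducible hf
  have hgsep := PerfectField.separable_of_irreducible hg
  have hfg : (f * g).map (algebraMap k E) ≠ 0 := map_ne_zero (mul_ne_zero hf.ne_zero hg.ne_zero)
  have hfs := (IsSplittingField.splits E (f * g)).of_dvd hfg (map_dvd _ (dvd_mul_right f g))
  have hgs := (IsSplittingField.splits E (f * g)).of_dvd hfg (map_dvd _ (dvd_mul_left g f))
  have := IsSplittingField.finiteDimensional E (f * g)
  have : IsGalois k E := { to_normal := Normal.of_isSplittingField (f * g) }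
  set H := MulAction.stabilizer kˣ (f.rootSet E) ⊓ MulAction.stabilizer kˣ (g.rootSet E)
  have hP := aroots_product_map_mul_eq_nsmul hf hg hfsep hgsep hfs hgs hBC hlam hmu
    (ne_zero_of_mem_rootSet_of_eval_zero_ne_zero hf0 hlam)
    (ne_zero_of_mem_rootSet_of_eval_zero_ne_zero hg0 hmu)
  have hint : IsIntegral k (lam * mu) := Algebra.IsIntegral.isIntegral _
  have hmsplit := Normal.splits (inferInstance : Normal k E) (lam * mu)
  have hdeg : f.natDegree * g.natDegree = Nat.card H * (minpoly k (lam * mu)).natDegree := by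
    have := congrArg Multiset.card hP
    rwa [Multiset.card_map, Multiset.card_product, Multiset.card_nsmul,
      card_aroots_eq_natDegree hfs, card_aroots_eq_natDegree hgs,
      card_aroots_eq_natDegree hmsplit] at this
  rw [hdeg, Nat.mul_div_cancel _ (minpoly.natDegree_pos hint)]
  have : Finite H := Nat.finite_of_card_ne_zero fun h => by
    simp [h, hf.natDegree_pos.ne', hg.natDegree_pos.ne'] at hdeg
  refine ⟨?_, natCard_dvd_natDegree_of_le_stabilizer inf_le_left hfsep hfs hf0,
    natCard_dvd_natDegree_of_le_stabilizer inf_le_right hgsep hgs hg0,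
    H.exists_finset_card_eq_natCard_and_pow_natCard_eq_one,
    fun q hq _ => have := Fact.mk hq; H.not_dvd_natCard_of_charP q⟩
  rw [show (fun q : E × E => X - Polynomial.C (q.1 * q.2)) =
      (fun a => X - Polynomial.C a) ∘ (fun q => q.1 * q.2) from rfl, ← Multiset.map_map, hP,
    Multiset.map_nsmul, Multiset.prod_nsmul,
    ← hmsplit.eq_prod_roots_of_monic ((minpoly.monic hint).map _)]

theorem stmt14 {k E : Type*} [Field k] [PerfectField k] [Field E] [Algebra k E]
    (f g : k[X]) (hfm : f.Monic) (hgm : g.Monic) (hf : Irreducible f) (hg : Irreducible g)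
    (hf0 : f.eval 0 ≠ 0) (hg0 : g.eval 0 ≠ 0)
    [Polynomial.IsSplittingField k E (f * g)]
    (B C : IntermediateField k E)
    (hB : B = IntermediateField.adjoin k (f.rootSet E))
    (hC : C = IntermediateField.adjoin k (g.rootSet E))
    (hBC : B ⊓ C = ⊥)
    (lam mu : E) (hlam : lam ∈ f.rootSet E) (hmu : mu ∈ g.rootSet E)
    (l : ℕ) (hl : l = f.natDegree * g.natDegree / (minpoly k (lam * mu)).natDegree) :
    ((f.aroots E ×ˢ g.aroots E).map fun q : E × E => X - Polynomial.C (q.1 * q.2)).prod =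
        ((minpoly k (lam * mu)).map (algebraMap k E)) ^ l ∧
      l ∣ f.natDegree ∧ l ∣ g.natDegree ∧
      (∃ S : Finset k, S.card = l ∧ ∀ a ∈ S, a ^ l = 1) ∧
      ∀ q : ℕ, q.Prime → CharP k q → ¬ q ∣ l :=
  stmt14_general f g hf hg hf0 hg0 B C hB hC hBC lam mu hlam hmu l hl
end

section
/- Let k be a perfect field and let f, g ∈ k[x] be monic irreducible polynomials with f(0) ≠ 0 ≠ g(0). Let E be a splitting field of f·g over k, let B ⊆ E and C ⊆ E be the splitting fields of f and g inside E, set F = B ∩ C, and fix zeros λ ∈ B of f and μ ∈ C of g. Let X be the orbit of the minimal polynomial m_F(λμ) ∈ F[x] under the action of the Galois group Gal(F/k) on F[x] (acting by transforming coefficients). Then the minimal polynomial of λμ over k equals the product of the distinct polynomials in X: m_k(λμ)(x) = ∏_{h ∈ X} h(x). -/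
open Polynomial MulAction

/-!
Write `α = λμ`. Since `B` and `C` are normal over the perfect field `k`, `F = B ⊓ C` is
Galois over `k`. The product `P` of the `Gal(F/k)`-conjugates of `m_F(α)` is fixed by
`Gal(F/k)`, hence has coefficients in `k`; it vanishes at `α`, so `m_k(α) ∣ P`. Conversely,
`m_k(α)` is fixed by `Gal(F/k)`, so every conjugate of `m_F(α)` divides it, and distinct
conjugates are coprime monic irreducibles; hence `P ∣ m_k(α)`.
-/

theorem MulAction.smul_prod_finite_orbit {G M : Type*} [Group G] [CommMonoid M]
    [MulDistribMulAction G M] {a : M} (ha : (orbit G a).Finite) (g : G) :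
    g • ∏ b ∈ ha.toFinset, b = ∏ b ∈ ha.toFinset, b := by
  rw [Finset.smul_prod']
  refine Finset.prod_nbij' (g • ·) (g⁻¹ • ·) (fun b hb => ?_) (fun b hb => ?_)
    (fun b _ => inv_smul_smul g b) (fun b _ => smul_inv_smul g b) fun _ _ => rfl <;>
  · rw [Set.Finite.mem_toFinset] at hb ⊢
    exact mem_orbit_of_mem_orbit _ hb

theorem Polynomial.prod_dvd_of_forall_monic_irreducible_dvd {K : Type*} [Field K]
    {s : Finset K[X]} {q : K[X]} (hs : ∀ h ∈ s, h.Monic ∧ Irreducible h ∧ h ∣ q) :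
    ∏ h ∈ s, h ∣ q := by
  refine Finset.prod_dvd_of_coprime (fun h₁ h₁s h₂ h₂s hne => ?_) fun h hh => (hs h hh).2.2
  obtain ⟨h₁m, h₁i, -⟩ := hs h₁ h₁s
  obtain ⟨h₂m, h₂i, -⟩ := hs h₂ h₂s
  exact h₁i.coprime_iff_not_dvd.mpr fun hdvd =>
    hne (eq_of_monic_of_associated h₁m h₂m (h₁i.associated_of_dvd h₂i hdvd))

namespace Polynomial

variable {k F : Type*} [Field k] [Field F] [Algebra k F]

theorem algEquiv_smul_map_algebraMap (σ : F ≃ₐ[k] F) (q : k[X]) :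
    σ • q.map (algebraMap k F) = q.map (algebraMap k F) := by
  rw [smul_eq_map, map_map]
  congr 1
  exact RingHom.ext σ.commutes

theorem mem_lifts_of_forall_algEquiv_smul_eq [IsGalois k F] [FiniteDimensional k F]
    {P : F[X]} (hP : ∀ σ : F ≃ₐ[k] F, σ • P = P) : P ∈ lifts (algebraMap k F) := by
  refine (lifts_iff_coeff_lifts P).mpr fun n => ?_
  refine IntermediateField.mem_bot.mp ((IsGalois.mem_bot_iff_fixed _).mpr fun σ => ?_)
  simpa only [coeff_smul, AlgEquiv.smul_def] using congrArg (coeff · n) (hP σ)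

variable (k) in
theorem finite_galOrbit [FiniteDimensional k F] (p : F[X]) : (orbit (F ≃ₐ[k] F) p).Finite :=
  Finite.finite_mulAction_orbit p

variable {E : Type*} [Field E] [Algebra k E] [Algebra F E] [IsScalarTower k F E]

theorem minpoly_map_eq_prod_galOrbit [IsGalois k F] [FiniteDimensional k F]
    {α : E} (hα : IsIntegral k α) :
    (minpoly k α).map (algebraMap k F) =
      ∏ h ∈ (finite_galOrbit k (minpoly F α)).toFinset, h := by
  set X := (finite_galOrbit k (minpoly F α)).toFinset
  have hαF : IsIntegral F α := hα.tower_top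
  have hX : ∀ h ∈ X,
      h.Monic ∧ Irreducible h ∧ h ∣ (minpoly k α).map (algebraMap k F) := by
    intro _ hh
    obtain ⟨σ, rfl⟩ := mem_orbit_iff.mp ((Set.Finite.mem_toFinset _).mp hh)
    refine ⟨?_, ?_, ?_⟩
    · simpa only [smul_eq_map] using (minpoly.monic hαF).map _
    · exact (minpoly.irreducible hαF).map (MulSemiringAction.toRingEquiv _ F[X] σ)
    · rw [← algEquiv_smul_map_algebraMap σ]
      exact _root_.map_dvd (MulSemiringAction.toRingHom _ F[X] σ)
        (minpoly.dvd_map_of_isScalarTower k F α)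
  obtain ⟨q, hq⟩ := (mem_lifts _).mp <|
    mem_lifts_of_forall_algEquiv_smul_eq (smul_prod_finite_orbit (finite_galOrbit k (minpoly F α)))
  have hqα : aeval α q = 0 := by
    obtain ⟨r, hr⟩ : minpoly F α ∣ ∏ h ∈ X, h :=
      Finset.dvd_prod_of_mem _ ((Set.Finite.mem_toFinset _).mpr (mem_orbit_self _))
    rw [← aeval_map_algebraMap F, hq, hr, map_mul, minpoly.aeval, zero_mul]
  refine eq_of_monic_of_associated ((minpoly.monic hα).map _)
    (monic_prod_of_monic _ _ fun h hh => (hX h hh).1)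
    (associated_of_dvd_dvd ?_ (prod_dvd_of_forall_monic_irreducible_dvd hX))
  rw [← hq]
  exact map_dvd _ (minpoly.dvd k α hqα)

end Polynomial

theorem IntermediateField.normal_adjoin_rootSet {K L : Type*} [Field K] [Field L] [Algebra K L]
    {p : K[X]} (hp : (p.map (algebraMap K L)).Splits) : Normal K (adjoin K (p.rootSet L)) :=
  haveI := adjoin_rootSet_isSplittingField hp
  Normal.of_isSplittingField p

theorem stmt15_general {k E : Type*} [Field k] [PerfectField k] [Field E] [Algebra k E]
    (f g : k[X]) (hf : Irreducible f) (hg : Irreducible g)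
    [Polynomial.IsSplittingField k E (f * g)]
    (B C : IntermediateField k E)
    (hB : B = IntermediateField.adjoin k (f.rootSet E))
    (hC : C = IntermediateField.adjoin k (g.rootSet E))
    (lam mu : E) :
    ∃ Xorb : Finset (Polynomial ↥(B ⊓ C)),
      (↑Xorb : Set (Polynomial ↥(B ⊓ C))) =
        {h | ∃ σ : ↥(B ⊓ C) ≃ₐ[k] ↥(B ⊓ C),
          h = (minpoly ↥(B ⊓ C) (lam * mu)).map σ.toRingEquiv.toRingHom} ∧
      (minpoly k (lam * mu)).map (algebraMap k ↥(B ⊓ C)) = ∏ h ∈ Xorb, h := by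
  have : FiniteDimensional k E := IsSplittingField.finiteDimensional E (f * g)
  have hfg := IsSplittingField.splits E (f * g)
  have hfg0 : (f * g).map (algebraMap k E) ≠ 0 :=
    Polynomial.map_ne_zero (mul_ne_zero hf.ne_zero hg.ne_zero)
  have : Normal k B := hB ▸ IntermediateField.normal_adjoin_rootSet
    (hfg.of_dvd hfg0 (Polynomial.map_dvd _ (dvd_mul_right f g)))
  have : Normal k C := hC ▸ IntermediateField.normal_adjoin_rootSet
    (hfg.of_dvd hfg0 (Polynomial.map_dvd _ (dvd_mul_left g f)))
  have : IsGalois k ↥(B ⊓ C) := {}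
  refine ⟨_, ?_, minpoly_map_eq_prod_galOrbit (Algebra.IsIntegral.isIntegral (lam * mu))⟩
  ext h
  rw [Set.Finite.coe_toFinset, mem_orbit_iff]
  refine exists_congr fun σ => ?_
  rw [eq_comm, smul_eq_map]
  rfl

theorem stmt15 {k E : Type*} [Field k] [PerfectField k] [Field E] [Algebra k E]
    (f g : k[X]) (hfm : f.Monic) (hgm : g.Monic) (hf : Irreducible f) (hg : Irreducible g)
    (hf0 : f.eval 0 ≠ 0) (hg0 : g.eval 0 ≠ 0)
    [Polynomial.IsSplittingField k E (f * g)]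
    (B C : IntermediateField k E)
    (hB : B = IntermediateField.adjoin k (f.rootSet E))
    (hC : C = IntermediateField.adjoin k (g.rootSet E))
    (lam mu : E) (hlam : lam ∈ f.rootSet E) (hmu : mu ∈ g.rootSet E) :
    ∃ Xorb : Finset (Polynomial ↥(B ⊓ C)),
      (↑Xorb : Set (Polynomial ↥(B ⊓ C))) =
        {h | ∃ σ : ↥(B ⊓ C) ≃ₐ[k] ↥(B ⊓ C),
          h = (minpoly ↥(B ⊓ C) (lam * mu)).map σ.toRingEquiv.toRingHom} ∧
      (minpoly k (lam * mu)).map (algebraMap k ↥(B ⊓ C)) = ∏ h ∈ Xorb, h :=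
  stmt15_general f g hf hg B C hB hC lam mu
end

section
/- Let k be a perfect field and let f, g ∈ k[x] be monic irreducible polynomials of degree 2 with f(0) ≠ 0 ≠ g(0). Let E be a splitting field of f·g over k, let B and C be the splitting fields of f and g inside E, and assume B ∩ C = k. Let λ, λ′ ∈ B be the two zeros of f and μ, μ′ ∈ C the two zeros of g, and set P(x) = (x − λμ)(x − λμ′)(x − λ′μ)(x − λ′μ′). Then P ∈ k[x], and either P is irreducible over k, or P = h² for a monic irreducible polynomial h ∈ k[x] of degree 2; moreover the latter case occurs if and only if there exist b, c ∈ k with f(x) = x² − b and g(x) = x² − c. -/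
open Polynomial IntermediateField

-- irreducible quadratic has no root
lemma aux_no_root {k : Type*} [Field k] {p : k[X]} (hp : Irreducible p)
    (hd : p.natDegree = 2) (r : k) : p.eval r ≠ 0 := by
  intro h
  obtain ⟨q, hq⟩ := dvd_iff_isRoot.mpr h
  rcases hp.isUnit_or_isUnit hq with h1 | h1
  · exact (Polynomial.not_isUnit_X_sub_C r) h1
  · have hq0 : q ≠ 0 := by
      rintro rfl
      rw [mul_zero] at hq
      exact hp.ne_zero hq
    have := natDegree_eq_zero_of_isUnit h1
    rw [hq, natDegree_mul (X_sub_C_ne_zero r) hq0, natDegree_X_sub_C, this] at hd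
    omega

-- monic degree-2 polynomial whose aroots are {a,b}
lemma aux_map_eq {k E : Type*} [Field k] [Field E] [Algebra k E] {p : k[X]}
    (hm : p.Monic) (hd : p.natDegree = 2) {a b : E} (h : p.aroots E = {a, b}) :
    p.map (algebraMap k E) = (X - C a) * (X - C b) := by
  have hmm : (p.map (algebraMap k E)).Monic := hm.map _
  have hdm : (p.map (algebraMap k E)).natDegree = 2 := by
    rw [natDegree_map]; exact hd
  have hcard : (p.map (algebraMap k E)).roots.card = (p.map (algebraMap k E)).natDegree := by
    rw [hdm]; rw [aroots] at h; rw [h]; rfl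
  have := prod_multiset_X_sub_C_of_monic_of_roots_card_eq hmm hcard
  rw [aroots] at h
  rw [← this, h]
  simp [Multiset.map_cons, Multiset.prod_cons]

lemma aux_sigma {k E : Type*} [Field k] [Field E] [Algebra k E]
    [FiniteDimensional k E] [IsGalois k E]
    {g : k[X]} (hgm : g.Monic) (hgd : g.natDegree = 2)
    (B : IntermediateField k E) {mu mu' : E}
    (hrmu : aeval mu g = 0) (hrmu' : aeval mu' g = 0)
    (hgE : g.map (algebraMap k E) = (X - C mu) * (X - C mu'))
    (hmu : mu ≠ mu') (hmuB : mu ∉ B) :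
    ∃ σ : E ≃ₐ[k] E, σ mu = mu' ∧ σ mu' = mu ∧ ∀ x ∈ B, σ x = x := by
  have hint : IsIntegral B mu := (IsIntegral.of_finite k mu).tower_top
  have hdvd : minpoly B mu ∣ g.map (algebraMap k B) :=
    minpoly.dvd _ _ (by rw [aeval_map_algebraMap]; exact hrmu)
  have hgBmonic : (g.map (algebraMap k B)).Monic := hgm.map _
  have hgBdeg : (g.map (algebraMap k B)).natDegree = 2 := by
    rw [natDegree_map]; exact hgd
  have hne1 : (minpoly B mu).natDegree ≠ 1 := by
    intro h1
    obtain ⟨r, hr⟩ := minpoly.natDegree_eq_one_iff.mp h1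
    exact hmuB (hr ▸ r.2)
  have hdeg2 : (minpoly B mu).natDegree = 2 := by
    have hle : (minpoly B mu).natDegree ≤ 2 := by
      rw [← hgBdeg]; exact natDegree_le_of_dvd hdvd hgBmonic.ne_zero
    have hpos := minpoly.natDegree_pos hint
    omega
  have heq : g.map (algebraMap k B) = minpoly B mu :=
    eq_of_monic_of_dvd_of_natDegree_le (minpoly.monic hint) hgBmonic hdvd
      (by rw [hgBdeg, hdeg2])
  have hev : aeval mu' (minpoly B mu) = 0 := by
    rw [← heq, aeval_map_algebraMap]; exact hrmu'
  obtain ⟨σ, hσ⟩ := minpoly.exists_algEquiv_of_root' hint.isAlgebraic hev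
  refine ⟨σ.restrictScalars k, hσ, ?_, ?_⟩
  · have hroot : aeval (σ mu') g = 0 := by
      have := aeval_algHom_apply ((σ.restrictScalars k : E ≃ₐ[k] E) : E →ₐ[k] E) mu' g
      rw [hrmu', map_zero] at this
      exact this
    have : ((σ mu') - mu) * ((σ mu') - mu') = 0 := by
      have h2 : eval (σ mu') (g.map (algebraMap k E)) = 0 := by
        rw [eval_map, ← aeval_def]; exact hroot
      rw [hgE] at h2
      simpa using h2
    rcases mul_eq_zero.mp this with h3 | h3
    · exact sub_eq_zero.mp h3
    · exfalso
      have : σ mu' = σ mu := by rw [hσ]; exact sub_eq_zero.mp h3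
      exact hmu.symm (σ.injective this)
  · intro x hx
    exact σ.commutes ⟨x, hx⟩

theorem stmt16 {k E : Type*} [Field k] [PerfectField k] [Field E] [Algebra k E]
    (f g : k[X]) (hfm : f.Monic) (hgm : g.Monic) (hf : Irreducible f) (hg : Irreducible g)
    (hfd : f.natDegree = 2) (hgd : g.natDegree = 2)
    (hf0 : f.eval 0 ≠ 0) (hg0 : g.eval 0 ≠ 0)
    [Polynomial.IsSplittingField k E (f * g)]
    (hBC : IntermediateField.adjoin k (f.rootSet E) ⊓
        IntermediateField.adjoin k (g.rootSet E) = ⊥)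
    (lam lam' mu mu' : E) (hlam : lam ≠ lam') (hmu : mu ≠ mu')
    (hfroots : f.aroots E = {lam, lam'}) (hgroots : g.aroots E = {mu, mu'}) :
    ∃ P : k[X],
      P.map (algebraMap k E) =
        (X - C (lam * mu)) * (X - C (lam * mu')) * (X - C (lam' * mu)) *
          (X - C (lam' * mu')) ∧
      (Irreducible P ∨
        ∃ h : k[X], h.Monic ∧ Irreducible h ∧ h.natDegree = 2 ∧ P = h ^ 2) ∧
      ((∃ h : k[X], h.Monic ∧ Irreducible h ∧ h.natDegree = 2 ∧ P = h ^ 2) ↔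
        ∃ b c : k, f = X ^ 2 - C b ∧ g = X ^ 2 - C c) := by
  classical
  have hinj : Function.Injective (algebraMap k E) := (algebraMap k E).injective
  have hfE : f.map (algebraMap k E) = (X - C lam) * (X - C lam') := aux_map_eq hfm hfd hfroots
  have hgE : g.map (algebraMap k E) = (X - C mu) * (X - C mu') := aux_map_eq hgm hgd hgroots
  -- roots
  have hroot : ∀ {p : k[X]} {a b : E}, p.map (algebraMap k E) = (X - C a) * (X - C b) →
      aeval a p = 0 ∧ aeval b p = 0 := by
    intro p a b h
    constructor <;> (rw [aeval_def, ← eval_map, h]; simp)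
  obtain ⟨hrlam, hrlam'⟩ := hroot hfE
  obtain ⟨hrmu, hrmu'⟩ := hroot hgE
  -- no root of f or g lies in (the image of) k
  have hnotk : ∀ {p : k[X]}, Irreducible p → p.natDegree = 2 → ∀ {x : E}, aeval x p = 0 →
      ∀ r : k, algebraMap k E r ≠ x := by
    intro p hp hpd x hx r hr
    have : aeval x p = algebraMap k E (p.eval r) := by
      rw [← hr, aeval_algebraMap_apply]; simp [coe_aeval_eq_eval]
    rw [hx] at this
    exact aux_no_root hp hpd r ((_root_.map_eq_zero _).mp this.symm)
  -- roots are nonzero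
  have hnz : ∀ {p : k[X]}, p.eval 0 ≠ 0 → ∀ {x : E}, aeval x p = 0 → x ≠ 0 := by
    rintro p hp0 x hx rfl
    rw [aeval_def, ← eval_map, ← coeff_zero_eq_eval_zero, coeff_map,
      coeff_zero_eq_eval_zero] at hx
    exact hp0 ((_root_.map_eq_zero _).mp hx)
  have hlam0 : lam ≠ 0 := hnz hf0 hrlam
  have hlam'0 : lam' ≠ 0 := hnz hf0 hrlam'
  have hmu0 : mu ≠ 0 := hnz hg0 hrmu
  have hmu'0 : mu' ≠ 0 := hnz hg0 hrmu'
  -- membership in B / C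
  set B := IntermediateField.adjoin k (f.rootSet E) with hBdef
  set CC := IntermediateField.adjoin k (g.rootSet E) with hCdef
  have hmemB : ∀ {x : E}, aeval x f = 0 → x ∈ B := by
    intro x hx
    exact IntermediateField.subset_adjoin _ _ ((mem_rootSet).mpr ⟨hfm.ne_zero, hx⟩)
  have hmemC : ∀ {x : E}, aeval x g = 0 → x ∈ CC := by
    intro x hx
    exact IntermediateField.subset_adjoin _ _ ((mem_rootSet).mpr ⟨hgm.ne_zero, hx⟩)
  have hlamB : lam ∈ B := hmemB hrlam
  have hlam'B : lam' ∈ B := hmemB hrlam'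
  have hmuC : mu ∈ CC := hmemC hrmu
  have hmu'C : mu' ∈ CC := hmemC hrmu'
  have hmuB : mu ∉ B := by
    intro hmB
    obtain ⟨r, hr⟩ := IntermediateField.mem_bot.mp (hBC ▸ IntermediateField.mem_inf.mpr ⟨hmB, hmuC⟩)
    exact hnotk hg hgd hrmu r hr
  have hlamC : lam ∉ CC := by
    intro hlC
    obtain ⟨r, hr⟩ := IntermediateField.mem_bot.mp (hBC ▸ IntermediateField.mem_inf.mpr ⟨hlamB, hlC⟩)
    exact hnotk hf hfd hrlam r hr
  -- Galois setup
  have hfg : f ≠ g := by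
    intro h
    have hBC' : B = ⊥ := by
      rw [hBdef, hCdef, h] at hBC; rw [hBdef, h]; rw [inf_idem] at hBC; exact hBC
    have : lam ∈ (⊥ : IntermediateField k E) := hBC' ▸ hlamB
    obtain ⟨r, hr⟩ := IntermediateField.mem_bot.mp this
    exact hnotk hf hfd hrlam r hr
  have hcop : IsCoprime f g := by
    rw [hf.coprime_iff_not_dvd]
    intro hdvd
    exact hfg (eq_of_monic_of_associated hfm hgm (hf.associated_of_dvd hg hdvd))
  have hsep : (f * g).Separable :=
    (PerfectField.separable_of_irreducible hf).mul (PerfectField.separable_of_irreducible hg) hcop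
  haveI : FiniteDimensional k E := Polynomial.IsSplittingField.finiteDimensional E (f * g)
  haveI : IsGalois k E := IsGalois.of_separable_splitting_field hsep
  -- the automorphisms
  obtain ⟨σ, hσmu, hσmu', hσB⟩ := aux_sigma hgm hgd B hrmu hrmu' hgE hmu hmuB
  obtain ⟨τ, hτlam, hτlam', hτC⟩ := aux_sigma hfm hfd CC hrlam hrlam' hfE hlam hlamC
  have hσlam : σ lam = lam := hσB lam hlamB
  have hσlam' : σ lam' = lam' := hσB lam' hlam'B
  have hτmu : τ mu = mu := hτC mu hmuC
  have hτmu' : τ mu' = mu' := hτC mu' hmu'C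
  -- coefficient identities
  have hcoeffs : ∀ {p : k[X]} {a b : E}, p.map (algebraMap k E) = (X - C a) * (X - C b) →
      algebraMap k E (p.coeff 1) = -(a + b) ∧ algebraMap k E (p.coeff 0) = a * b := by
    intro p a b h
    have h2 : p.map (algebraMap k E) = X ^ 2 - C (a + b) * X + C (a * b) := by rw [h, C_add, C_mul]; ring
    constructor
    · have := congrArg (fun q => q.coeff 1) h2
      simpa [coeff_map] using this
    · have := congrArg (fun q => q.coeff 0) h2
      simpa [coeff_map] using this
  obtain ⟨hs1, hs0⟩ := hcoeffs hfE
  obtain ⟨ht1, ht0⟩ := hcoeffs hgE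
  have hsumB : lam + lam' ∈ B := by
    rw [show lam + lam' = algebraMap k E (-(f.coeff 1)) by rw [map_neg, hs1, neg_neg]]
    exact B.algebraMap_mem _
  have hsumC : mu + mu' ∈ B := by
    rw [show mu + mu' = algebraMap k E (-(g.coeff 1)) by rw [map_neg, ht1, neg_neg]]
    exact B.algebraMap_mem _
  -- key derivation: mu in B contradiction
  have hkey : ∀ x : E, x ∈ B → (lam + lam') * mu = x * (mu + mu') → lam + lam' = 0 := by
    intro x hxB heq
    by_contra hs
    apply hmuB
    have : mu = (lam + lam')⁻¹ * (x * (mu + mu')) := by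
      field_simp
      linear_combination heq
    rw [this]
    exact B.mul_mem (B.inv_mem hsumB) (B.mul_mem hxB hsumC)
  -- the polynomial P
  set P : k[X] := X ^ 4 - C (f.coeff 1 * g.coeff 1) * X ^ 3
      + C (g.coeff 0 * f.coeff 1 ^ 2 + f.coeff 0 * g.coeff 1 ^ 2 - 2 * (f.coeff 0 * g.coeff 0)) * X ^ 2
      - C (f.coeff 0 * f.coeff 1 * g.coeff 0 * g.coeff 1) * X + C (f.coeff 0 ^ 2 * g.coeff 0 ^ 2)
    with hPdef
  have hPmap : P.map (algebraMap k E) = (X - C (lam * mu)) * (X - C (lam * mu')) *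
      (X - C (lam' * mu)) * (X - C (lam' * mu')) := by
    rw [hPdef]
    simp only [Polynomial.map_add, Polynomial.map_sub, Polynomial.map_mul, Polynomial.map_pow,
      Polynomial.map_X, Polynomial.map_C, Polynomial.map_ofNat, map_mul, map_add, map_sub, map_pow, map_ofNat]
    rw [hs1, hs0, ht1, ht0]
    simp only [C_add, C_sub, C_mul, C_neg, C_pow, map_ofNat]
    ring
  have hQmonic : ((X - C (lam * mu)) * (X - C (lam * mu')) *
      (X - C (lam' * mu)) * (X - C (lam' * mu'))).Monic :=
    (((monic_X_sub_C _).mul (monic_X_sub_C _)).mul (monic_X_sub_C _)).mul (monic_X_sub_C _)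
  have hQdeg : ((X - C (lam * mu)) * (X - C (lam * mu')) *
      (X - C (lam' * mu)) * (X - C (lam' * mu'))).natDegree = 4 := by
    rw [(((monic_X_sub_C _).mul (monic_X_sub_C _)).mul (monic_X_sub_C _)).natDegree_mul
        (monic_X_sub_C _),
      ((monic_X_sub_C _).mul (monic_X_sub_C _)).natDegree_mul (monic_X_sub_C _),
      (monic_X_sub_C _).natDegree_mul (monic_X_sub_C _)]
    simp only [natDegree_X_sub_C]
  have hPdeg : P.natDegree = 4 := by
    have h1 := natDegree_map (R := k) (S := E) (algebraMap k E) (p := P)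
    rw [hPmap, hQdeg] at h1
    exact h1.symm
  have hPmonic : P.Monic := by
    apply monic_of_injective hinj
    rw [hPmap]; exact hQmonic
  have haevalP : aeval (lam * mu) P = 0 := by
    rw [aeval_def, ← eval_map, hPmap]
    simp [eval_mul, eval_sub, eval_X, eval_C]
  have hconjroot : ∀ (ρ : E ≃ₐ[k] E) (x : E) (p : k[X]), aeval x p = 0 → aeval (ρ x) p = 0 := by
    intro ρ x p hx
    rw [aeval_algHom_apply ρ x p, hx, map_zero]
  have hintlm : IsIntegral k (lam * mu) := IsIntegral.of_finite k _
  have hmmonic := minpoly.monic hintlm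
  have hmne : (minpoly k (lam * mu)).map (algebraMap k E) ≠ 0 :=
    (Polynomial.map_ne_zero_iff hinj).mpr (minpoly.ne_zero hintlm)
  have r1 : aeval (lam * mu) (minpoly k (lam * mu)) = 0 := minpoly.aeval _ _
  have r2 : aeval (lam * mu') (minpoly k (lam * mu)) = 0 := by
    have := hconjroot σ _ _ r1
    rwa [map_mul, hσlam, hσmu] at this
  have d12 : lam * mu ≠ lam * mu' := fun hq => hmu (mul_left_cancel₀ hlam0 hq)
  have d13 : lam * mu ≠ lam' * mu := fun hq => hlam (mul_right_cancel₀ hmu0 hq)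
  have d24 : lam * mu' ≠ lam' * mu' := fun hq => hlam (mul_right_cancel₀ hmu'0 hq)
  have d34 : lam' * mu ≠ lam' * mu' := fun hq => hmu (mul_left_cancel₀ hlam'0 hq)
  by_cases hcase : lam * mu = lam' * mu'
  · -- the square case
    have hs : lam + lam' = 0 := hkey lam' hlam'B (by linear_combination hcase)
    have hl' : lam' = -lam := by linear_combination hs
    have hm' : mu' = -mu := by
      rw [hl'] at hcase
      have h2 : lam * (mu + mu') = 0 := by linear_combination hcase
      rcases mul_eq_zero.mp h2 with h3 | h3
      · exact absurd h3 hlam0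
      · linear_combination h3
    set h : k[X] := X ^ 2 - C (f.coeff 0 * g.coeff 0) with hhdef
    have hhmap : h.map (algebraMap k E) = (X - C (lam * mu)) * (X + C (lam * mu)) := by
      rw [hhdef, Polynomial.map_sub, Polynomial.map_pow, Polynomial.map_X, Polynomial.map_C,
        map_mul (algebraMap k E), hs0, ht0, hl', hm']
      simp only [C_mul, C_neg]
      ring
    have hhmonic : h.Monic := monic_X_pow_sub_C _ (by norm_num)
    have hhdeg : h.natDegree = 2 := by
      rw [hhdef]; exact natDegree_X_pow_sub_C
    have haevalh : aeval (lam * mu) h = 0 := by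
      rw [aeval_def, ← eval_map, hhmap]; simp
    have hge2 : 2 ≤ (minpoly k (lam * mu)).natDegree := by
      have hsub : ({lam * mu, lam * mu'} : Finset E).val ⊆
          ((minpoly k (lam * mu)).map (algebraMap k E)).roots := by
        intro x hx
        rw [mem_roots']
        refine ⟨hmne, ?_⟩
        rw [IsRoot, eval_map, ← aeval_def]
        have : x = lam * mu ∨ x = lam * mu' := by simpa using hx
        rcases this with rfl | rfl <;> assumption
      have hcard : ({lam * mu, lam * mu'} : Finset E).card = 2 := by
        rw [Finset.card_insert_of_notMem (Finset.notMem_singleton.mpr d12),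
          Finset.card_singleton]
      calc 2 = _ := hcard.symm
        _ ≤ ((minpoly k (lam * mu)).map (algebraMap k E)).natDegree :=
            card_le_degree_of_subset_roots hsub
        _ = (minpoly k (lam * mu)).natDegree := natDegree_map _
    have heqh : h = minpoly k (lam * mu) :=
      eq_of_monic_of_dvd_of_natDegree_le hmmonic hhmonic (minpoly.dvd _ _ haevalh)
        (by rw [hhdeg]; exact hge2)
    have hhirr : Irreducible h := heqh ▸ minpoly.irreducible hintlm
    have hPh : P = h ^ 2 := by
      apply Polynomial.map_injective _ hinj
      rw [hPmap, Polynomial.map_pow, hhmap, hl', hm']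
      simp only [C_mul, C_neg]
      ring
    refine ⟨P, hPmap, Or.inr ⟨h, hhmonic, hhirr, hhdeg, hPh⟩,
      iff_of_true ⟨h, hhmonic, hhirr, hhdeg, hPh⟩
        ⟨-(f.coeff 0), -(g.coeff 0), ?_, ?_⟩⟩
    · apply Polynomial.map_injective _ hinj
      rw [hfE, Polynomial.map_sub, Polynomial.map_pow, Polynomial.map_X, Polynomial.map_C,
        map_neg (algebraMap k E), hs0, hl']
      simp only [C_mul, C_neg]
      ring
    · apply Polynomial.map_injective _ hinj
      rw [hgE, Polynomial.map_sub, Polynomial.map_pow, Polynomial.map_X, Polynomial.map_C,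
        map_neg (algebraMap k E), ht0, hm']
      simp only [C_mul, C_neg]
      ring
  · -- the irreducible case
    have d23 : lam * mu' ≠ lam' * mu := by
      intro heq
      have hs : lam + lam' = 0 := hkey lam hlamB (by linear_combination -heq)
      have hl' : lam' = -lam := by linear_combination hs
      apply hcase
      rw [hl'] at heq ⊢
      have hm' : mu' = -mu := mul_left_cancel₀ hlam0 (by linear_combination heq)
      rw [hm']; ring
    have r3 : aeval (lam' * mu) (minpoly k (lam * mu)) = 0 := by
      have := hconjroot τ _ _ r1
      rwa [map_mul, hτlam, hτmu] at this
    have r4 : aeval (lam' * mu') (minpoly k (lam * mu)) = 0 := by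
      have := hconjroot τ _ _ r2
      rwa [map_mul, hτlam, hτmu'] at this
    have hge4 : 4 ≤ (minpoly k (lam * mu)).natDegree := by
      have hsub : ({lam * mu, lam * mu', lam' * mu, lam' * mu'} : Finset E).val ⊆
          ((minpoly k (lam * mu)).map (algebraMap k E)).roots := by
        intro x hx
        rw [mem_roots']
        refine ⟨hmne, ?_⟩
        rw [IsRoot, eval_map, ← aeval_def]
        have : x = lam * mu ∨ x = lam * mu' ∨ x = lam' * mu ∨ x = lam' * mu' := by simpa using hx
        rcases this with rfl | rfl | rfl | rfl <;> assumption
      have hcard : ({lam * mu, lam * mu', lam' * mu, lam' * mu'} : Finset E).card = 4 := by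
        rw [Finset.card_insert_of_notMem (by
            intro hmem
            rcases Finset.mem_insert.mp hmem with hq | hq
            · exact d12 hq
            rcases Finset.mem_insert.mp hq with hq | hq
            · exact d13 hq
            · exact hcase (Finset.mem_singleton.mp hq)),
          Finset.card_insert_of_notMem (by
            intro hmem
            rcases Finset.mem_insert.mp hmem with hq | hq
            · exact d23 hq
            · exact d24 (Finset.mem_singleton.mp hq)),
          Finset.card_insert_of_notMem (Finset.notMem_singleton.mpr d34),
          Finset.card_singleton]
      calc 4 = _ := hcard.symm
        _ ≤ ((minpoly k (lam * mu)).map (algebraMap k E)).natDegree :=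
            card_le_degree_of_subset_roots hsub
        _ = (minpoly k (lam * mu)).natDegree := natDegree_map _
    have hPm : P = minpoly k (lam * mu) :=
      eq_of_monic_of_dvd_of_natDegree_le hmmonic hPmonic (minpoly.dvd _ _ haevalP)
        (by rw [hPdeg]; omega)
    have hPirr : Irreducible P := hPm ▸ minpoly.irreducible hintlm
    refine ⟨P, hPmap, Or.inl hPirr, iff_of_false ?_ ?_⟩
    · rintro ⟨h, hhm, hhirr, hhd, hPh⟩
      rw [hPh, sq] at hPirr
      rcases hPirr.isUnit_or_isUnit rfl with hu | hu <;> exact hhirr.not_isUnit hu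
    · rintro ⟨b, c, hfb, hgc⟩
      have hc1f : f.coeff 1 = 0 := by rw [hfb]; simp
      have hc1g : g.coeff 1 = 0 := by rw [hgc]; simp
      rw [hc1f, map_zero] at hs1
      rw [hc1g, map_zero] at ht1
      apply hcase
      have hl' : lam' = -lam := by linear_combination hs1
      have hm' : mu' = -mu := by linear_combination ht1
      rw [hl', hm']; ring
end

section
/- Let k be a perfect field and let f, g ∈ k[x] be monic irreducible polynomials of degree 2 with f(0) ≠ 0 ≠ g(0) which have the same splitting field F over k (so [F:k] = 2). Let κ be the nontrivial element of Gal(F/k), and let λ ∈ F be a zero of f and μ ∈ F a zero of g. Set h₁(x) = (x − λμ)(x − κ(λμ)) and h₂(x) = (x − λκ(μ))(x − κ(λ)μ). Then h₁ and h₂ lie in k[x], and ∏ over all pairs of zeros (x − λμ)(x − κ(λ)κ(μ))(x − λκ(μ))(x − κ(λ)μ) = h₁(x)h₂(x); moreover this degree-4 polynomial splits into linear factors over k if and only if there exist b, c ∈ k with f(x) = x² − b and g(x) = x² − c. -/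
open Polynomial

/-! Since `[F : k] = 2` and `κ ≠ 1`, the automorphism group of `F/k` is `{1, κ}`, so `F/k` is
Galois, `κ` is an involution and its fixed field is `k`. Hence `(X - u)(X - κ u)` always descends
to `k[X]`, and it splits over `k` iff `κ u = u`. So the quartic splits iff `λμ` and `λ κ(μ)` are
fixed by `κ`; as `λ, μ ∉ k` this means `κ λ = -λ` and `κ μ = -μ`, that is `λ², μ² ∈ k`, which for
monic irreducible quadratics means `f = X² - b` and `g = X² - c`. -/

theorem eq_X_pow_two_sub_C_of_aeval_eq_zero {k F : Type*} [Field k] [Field F] [Algebra k F]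
    {p : k[X]} (hm : p.Monic) (hp : Irreducible p) (hpd : p.natDegree = 2) {x : F}
    (hx : aeval x p = 0) {b : k} (hb : x ^ 2 = algebraMap k F b) : p = X ^ 2 - C b := by
  have hdvd : p ∣ X ^ 2 - C b := by
    rw [minpoly.eq_of_irreducible_of_monic hp hx hm]
    exact minpoly.dvd k x (by rw [map_sub, map_pow, aeval_X, aeval_C, hb, sub_self])
  exact eq_of_dvd_of_natDegree_le_of_leadingCoeff hdvd
    (by rw [natDegree_X_pow_sub_C, hpd])
    (by rw [hm.leadingCoeff, (monic_X_pow_sub_C b two_ne_zero).leadingCoeff])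

section QuadraticExtension

variable {k F : Type*} [Field k] [Field F] [Algebra k F] {κ : F ≃ₐ[k] F}

theorem card_algEquiv_eq_two_of_finrank_eq_two (hdim : Module.finrank k F = 2)
    (hκ : κ ≠ 1) : Nat.card (F ≃ₐ[k] F) = 2 := by
  have : FiniteDimensional k F := Module.finite_of_finrank_eq_succ hdim
  have : Nontrivial (F ≃ₐ[k] F) := nontrivial_of_ne κ 1 hκ
  refine le_antisymm ?_ Finite.one_lt_card
  rw [Nat.card_eq_fintype_card, ← hdim]
  exact AlgEquiv.card_le

theorem AlgEquiv.eq_of_ne_one_of_finrank_eq_two (hdim : Module.finrank k F = 2)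
    {σ : F ≃ₐ[k] F} (hκ : κ ≠ 1) (hσ : σ ≠ 1) : σ = κ :=
  ((Nat.card_eq_two_iff' 1).mp (card_algEquiv_eq_two_of_finrank_eq_two hdim hκ)).unique hσ hκ

theorem AlgEquiv.apply_apply_of_finrank_eq_two (hdim : Module.finrank k F = 2) (hκ : κ ≠ 1)
    (x : F) : κ (κ x) = x := by
  have hsq : κ * κ = 1 := by
    by_contra h
    exact hκ (mul_eq_right.mp (AlgEquiv.eq_of_ne_one_of_finrank_eq_two hdim hκ h))
  exact DFunLike.congr_fun hsq x

theorem exists_algebraMap_eq_of_apply_eq_self (hdim : Module.finrank k F = 2) (hκ : κ ≠ 1)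
    {x : F} (hx : κ x = x) : ∃ a : k, algebraMap k F a = x := by
  have : FiniteDimensional k F := Module.finite_of_finrank_eq_succ hdim
  have : IsGalois k F := IsGalois.of_card_aut_eq_finrank k F <| by
    rw [card_algEquiv_eq_two_of_finrank_eq_two hdim hκ, hdim]
  refine (IsGalois.mem_range_algebraMap_iff_fixed x).mpr fun σ => ?_
  by_cases hσ : σ = 1
  · rw [hσ, AlgEquiv.one_apply]
  · rwa [AlgEquiv.eq_of_ne_one_of_finrank_eq_two hdim hκ hσ]

theorem exists_map_eq_X_sub_C_mul_X_sub_C_apply (hdim : Module.finrank k F = 2) (hκ : κ ≠ 1)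
    (u : F) :
    ∃ h : k[X], h.map (algebraMap k F) = (X - C u) * (X - C (κ u)) := by
  have hκκ := AlgEquiv.apply_apply_of_finrank_eq_two hdim hκ
  obtain ⟨s, hs⟩ := exists_algebraMap_eq_of_apply_eq_self hdim hκ
    (x := u + κ u) (by rw [map_add, hκκ, add_comm])
  obtain ⟨t, ht⟩ := exists_algebraMap_eq_of_apply_eq_self hdim hκ
    (x := u * κ u) (by rw [map_mul, hκκ, mul_comm])
  refine ⟨X ^ 2 - C s * X + C t, ?_⟩
  simp only [Polynomial.map_add, Polynomial.map_sub, Polynomial.map_mul, Polynomial.map_pow,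
    map_X, map_C, hs, ht, C_add, C_mul]
  ring

theorem apply_ne_self_of_aeval_eq_zero (hdim : Module.finrank k F = 2) (hκ : κ ≠ 1)
    {p : k[X]} (hp : Irreducible p) (hpd : p.natDegree = 2)
    {x : F} (hx : aeval x p = 0) : κ x ≠ x := by
  intro hfix
  obtain ⟨a, rfl⟩ := exists_algebraMap_eq_of_apply_eq_self hdim hκ hfix
  have hroot : p.IsRoot a := by
    rwa [aeval_algebraMap_apply_eq_algebraMap_eval, map_eq_zero] at hx
  have := natDegree_eq_of_degree_eq_some (n := 1) (degree_eq_one_of_irreducible_of_root hp hroot)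
  omega

theorem exists_eq_X_pow_two_sub_C_iff_apply_eq_neg (hdim : Module.finrank k F = 2)
    (hκ : κ ≠ 1) {p : k[X]} (hm : p.Monic) (hp : Irreducible p)
    (hpd : p.natDegree = 2) {x : F} (hx : aeval x p = 0) :
    (∃ b : k, p = X ^ 2 - C b) ↔ κ x = -x := by
  have hne := apply_ne_self_of_aeval_eq_zero hdim hκ hp hpd hx
  constructor
  · rintro ⟨b, rfl⟩
    have hxb : x ^ 2 = algebraMap k F b := by
      rwa [map_sub, map_pow, aeval_X, aeval_C, sub_eq_zero] at hx
    have hsq : κ x ^ 2 = x ^ 2 := by rw [← map_pow, hxb, κ.commutes]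
    exact (sq_eq_sq_iff_eq_or_eq_neg.mp hsq).resolve_left hne
  · intro hneg
    obtain ⟨b, hb⟩ := exists_algebraMap_eq_of_apply_eq_self hdim hκ
      (x := x ^ 2) (by rw [map_pow, hneg, neg_sq])
    exact ⟨b, eq_X_pow_two_sub_C_of_aeval_eq_zero hm hp hpd hx hb.symm⟩

theorem apply_mul_eq_self_and_apply_mul_apply_eq_self_iff (hdim : Module.finrank k F = 2)
    (hκ : κ ≠ 1) {lam mu : F} (hlam : κ lam ≠ lam) (hmu : κ mu ≠ mu) :
    (κ (lam * mu) = lam * mu ∧ κ (lam * κ mu) = lam * κ mu) ↔ κ lam = -lam ∧ κ mu = -mu := by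
  have hκκ := AlgEquiv.apply_apply_of_finrank_eq_two hdim hκ
  have hne : ∀ {x : F}, κ x ≠ x → x ≠ 0 := fun h h0 => h (by rw [h0, map_zero])
  simp only [map_mul, hκκ]
  constructor
  · rintro ⟨h₁, h₂⟩
    -- multiplying the two relations gives `κ λ² · μ κ μ = λ² · μ κ μ`
    have hsq : κ lam ^ 2 = lam ^ 2 :=
      mul_right_cancel₀ (mul_ne_zero (hne hmu) (hne (κ.injective.ne hmu)))
        (by linear_combination (κ lam * mu) * h₁ + (lam * mu) * h₂)
    have hl : κ lam = -lam := (sq_eq_sq_iff_eq_or_eq_neg.mp hsq).resolve_left hlam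
    refine ⟨hl, mul_left_cancel₀ (hne hlam) ?_⟩
    linear_combination -h₂ + mu * hl
  · rintro ⟨hl, hm⟩
    constructor <;> rw [hl, hm] <;> ring

theorem exists_splits_map_eq_iff (hdim : Module.finrank k F = 2) (hκ : κ ≠ 1)
    (u v : F) :
    (∃ P : k[X], P.map (algebraMap k F) =
        ((X - C u) * (X - C (κ u))) * ((X - C v) * (X - C (κ v))) ∧ P.Splits) ↔
      κ u = u ∧ κ v = v := by
  constructor
  · rintro ⟨P, hP, hPs⟩
    have hP0 : P ≠ 0 := by
      rintro rfl
      simp [eq_comm (a := (0 : F[X])), X_sub_C_ne_zero] at hP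
    have hfix : ∀ w : F, (P.map (algebraMap k F)).IsRoot w → κ w = w := fun w hw => by
      obtain ⟨a, rfl⟩ := hPs.mem_range_of_isRoot hP0 hw
      exact κ.commutes a
    constructor
    · exact hfix u (by simp [hP])
    · exact hfix v (by simp [hP])
  · rintro ⟨hu, hv⟩
    obtain ⟨a, rfl⟩ := exists_algebraMap_eq_of_apply_eq_self hdim hκ hu
    obtain ⟨c, rfl⟩ := exists_algebraMap_eq_of_apply_eq_self hdim hκ hv
    refine ⟨((X - C a) * (X - C c)) ^ 2, ?_, ((Splits.X_sub_C a).mul (Splits.X_sub_C c)).pow 2⟩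
    simp only [κ.commutes, Polynomial.map_pow, Polynomial.map_mul, Polynomial.map_sub, map_X,
      map_C]
    ring

end QuadraticExtension

theorem stmt17_general {k F : Type*} [Field k] [Field F] [Algebra k F]
    (f g : k[X]) (hfm : f.Monic) (hgm : g.Monic) (hf : Irreducible f) (hg : Irreducible g)
    (hfd : f.natDegree = 2) (hgd : g.natDegree = 2)
    (hdim : Module.finrank k F = 2)
    (κ : F ≃ₐ[k] F) (hκ : κ ≠ AlgEquiv.refl)
    (lam mu : F) (hlam : lam ∈ f.rootSet F) (hmu : mu ∈ g.rootSet F) :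
    (∃ h₁ : k[X], h₁.map (algebraMap k F) =
        (X - C (lam * mu)) * (X - C (κ (lam * mu)))) ∧
      (∃ h₂ : k[X], h₂.map (algebraMap k F) =
        (X - C (lam * κ mu)) * (X - C (κ lam * mu))) ∧
      (X - C (lam * mu)) * (X - C (κ lam * κ mu)) * (X - C (lam * κ mu)) *
          (X - C (κ lam * mu)) =
        ((X - C (lam * mu)) * (X - C (κ (lam * mu)))) *
          ((X - C (lam * κ mu)) * (X - C (κ lam * mu))) ∧
      ((∃ P : k[X],
          P.map (algebraMap k F) =
            ((X - C (lam * mu)) * (X - C (κ (lam * mu)))) *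
              ((X - C (lam * κ mu)) * (X - C (κ lam * mu))) ∧
          P.Splits) ↔
        ∃ b c : k, f = X ^ 2 - C b ∧ g = X ^ 2 - C c) := by
  have hlam0 : aeval lam f = 0 := aeval_eq_zero_of_mem_rootSet hlam
  have hmu0 : aeval mu g = 0 := aeval_eq_zero_of_mem_rootSet hmu
  have hconj : κ (lam * κ mu) = κ lam * mu := by
    rw [map_mul, AlgEquiv.apply_apply_of_finrank_eq_two hdim hκ]
  refine ⟨exists_map_eq_X_sub_C_mul_X_sub_C_apply hdim hκ _,
    hconj ▸ exists_map_eq_X_sub_C_mul_X_sub_C_apply hdim hκ _, by rw [map_mul κ]; ring, ?_⟩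
  rw [← hconj, exists_splits_map_eq_iff hdim hκ,
    apply_mul_eq_self_and_apply_mul_apply_eq_self_iff hdim hκ
      (apply_ne_self_of_aeval_eq_zero hdim hκ hf hfd hlam0)
      (apply_ne_self_of_aeval_eq_zero hdim hκ hg hgd hmu0),
    ← exists_eq_X_pow_two_sub_C_iff_apply_eq_neg hdim hκ hfm hf hfd hlam0,
    ← exists_eq_X_pow_two_sub_C_iff_apply_eq_neg hdim hκ hgm hg hgd hmu0]
  exact exists_and_exists_comm

theorem stmt17 {k F : Type*} [Field k] [PerfectField k] [Field F] [Algebra k F]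
    (f g : k[X]) (hfm : f.Monic) (hgm : g.Monic) (hf : Irreducible f) (hg : Irreducible g)
    (hfd : f.natDegree = 2) (hgd : g.natDegree = 2)
    (hf0 : f.eval 0 ≠ 0) (hg0 : g.eval 0 ≠ 0)
    [Polynomial.IsSplittingField k F f] [Polynomial.IsSplittingField k F g]
    (hdim : Module.finrank k F = 2)
    (κ : F ≃ₐ[k] F) (hκ : κ ≠ AlgEquiv.refl)
    (lam mu : F) (hlam : lam ∈ f.rootSet F) (hmu : mu ∈ g.rootSet F) :
    (∃ h₁ : k[X], h₁.map (algebraMap k F) =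
        (X - C (lam * mu)) * (X - C (κ (lam * mu)))) ∧
      (∃ h₂ : k[X], h₂.map (algebraMap k F) =
        (X - C (lam * κ mu)) * (X - C (κ lam * mu))) ∧
      (X - C (lam * mu)) * (X - C (κ lam * κ mu)) * (X - C (lam * κ mu)) *
          (X - C (κ lam * mu)) =
        ((X - C (lam * mu)) * (X - C (κ (lam * mu)))) *
          ((X - C (lam * κ mu)) * (X - C (κ lam * mu))) ∧
      ((∃ P : k[X],
          P.map (algebraMap k F) =
            ((X - C (lam * mu)) * (X - C (κ (lam * mu)))) *
              ((X - C (lam * κ mu)) * (X - C (κ lam * mu))) ∧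
          P.Splits) ↔
        ∃ b c : k, f = X ^ 2 - C b ∧ g = X ^ 2 - C c) :=
  stmt17_general f g hfm hgm hf hg hfd hgd hdim κ hκ lam mu hlam hmu
end

section
/- Let K be an algebraically closed field and k a subfield with [K : k] = 2, and fix i ∈ K with i² = −1; write every λ ∈ K as λ = a + bi with a, b ∈ k and let λ̄ = a − bi. For λ = a + bi ∈ K∖k let R_λ be the 2×2 matrix over k with rows (a, −b) and (b, a), and for c ∈ k let J_c(1) be the 1×1 matrix (c). Then for all nonzero λ, μ ∈ K: (1) if λ, μ ∈ k then J_λ(1) ⊗ J_μ(1) ~ J_{λμ}(1); (2) if λ ∈ k and μ ∈ K∖k then J_λ(1) ⊗ R_μ ~ R_{λμ}; and for λ, μ ∈ K∖k: (3) if λ, μ ∈ k·i then R_λ ⊗ R_μ ~ 2J_{λμ}(1) ⊕ 2J_{−λμ}(1); (4) if λ, μ ∉ k·i and λ̄ = rμ for some r ∈ k, then R_λ ⊗ R_μ ~ 2J_{λμ}(1) ⊕ R_{λ̄μ}; (5) if λ, μ ∉ k·i and λ = rμ for some r ∈ k, then R_λ ⊗ R_μ ~ 2J_{λ̄μ}(1)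 ⊕ R_{λμ}; (6) otherwise R_λ ⊗ R_μ ~ R_{λμ} ⊕ R_{λ̄μ}. -/
/-!
Write `J = R_i`, so that `x + y i ↦ R_{x + y i} = x + y J` embeds `k(i)` into the `2 × 2`
matrices as a commutative subalgebra. Cut into `2 × 2` blocks, `R_λ ⊗ R_μ` is the matrix
`[[a R_μ, -b R_μ], [b R_μ, a R_μ]]` with entries in that subalgebra. Since `(1, ±J)` are left
eigenvectors of `R_λ` for `λ` and `λ̄`, conjugating by `S = [[1, J], [1, -J]]` diagonalises it
to `R_{λμ} ⊕ R_{λ̄μ}`; `S` has inverse `½ [[1, 1], [-J, J]]`, and `2 ≠ 0` because `i ∉ k`.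
Every case is a specialisation: `λ̄ ∈ kμ`, resp. `λ ∈ kμ`, makes the imaginary part `ad + bc`
of `λμ`, resp. `ad - bc` of `λ̄μ`, vanish, so that block becomes scalar; in the purely
imaginary case both do.
-/

open Matrix Kronecker

/-- The `2 × 2` matrix over `k` representing the element `x + y·i` of `K = k(i)`,
i.e. the matrix with rows `(x, -y)` and `(y, x)`. -/
def Rmat {k : Type*} [Field k] (x y : k) : Matrix (Fin 2) (Fin 2) k :=
  !![x, -y; y, x]

namespace MatSimilar

variable {k : Type*} [Field k] {α β γ : Type*} [Fintype α] [DecidableEq α]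
  [Fintype β] [DecidableEq β] [Fintype γ] [DecidableEq γ] {A : Matrix α α k} {B : Matrix β β k}

theorem of_reindex_eq (e : α ≃ β) (h : reindex e e A = B) : MatSimilar A B :=
  ⟨e, 1, isUnit_one, by simp [h]⟩

theorem of_mul_eq_mul (e : α ≃ β) {S : Matrix β β k} (hS : IsUnit S)
    (h : S * reindex e e A = B * S) : MatSimilar A B := by
  have hdet := (isUnit_iff_isUnit_det S).mp hS
  refine ⟨e, S⁻¹, (isUnit_nonsing_inv_iff).mpr hS, ?_⟩
  rw [nonsing_inv_nonsing_inv _ hdet, mul_assoc, ← h, ← mul_assoc, nonsing_inv_mul _ hdet,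
    one_mul]

theorem reindex_right (h : MatSimilar A B) (e : β ≃ γ) : MatSimilar A (reindex e e B) := by
  obtain ⟨e', T, hT, h⟩ := h
  refine ⟨e'.trans e, reindex e e T, (isUnit_submatrix_equiv _ _).mpr hT, ?_⟩
  rw [inv_reindex]
  simp only [reindex_apply, submatrix_mul_equiv] at h ⊢
  rw [← h, submatrix_submatrix]
  rfl

end MatSimilar

theorem matSimilar_singleton_kronecker {k β : Type*} [Field k] [Fintype β] [DecidableEq β]
    (a : k) (B : Matrix β β k) : MatSimilar (!![a] ⊗ₖ B) (a • B) :=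
  MatSimilar.of_reindex_eq (Equiv.uniqueProd β (Fin 1)) (by ext; simp [Equiv.uniqueProd])

def finTwoProdEquivSum : Fin 2 × Fin 2 ≃ Fin 2 ⊕ Fin 2 where
  toFun x := if x.1 = 0 then Sum.inl x.2 else Sum.inr x.2
  invFun := Sum.elim (fun j => (0, j)) (fun j => (1, j))
  left_inv := by decide
  right_inv := by decide

section Rmat

variable {k : Type*} [Field k]

theorem Rmat_zero_right (x : k) : Rmat x 0 = diagonal ![x, x] := by
  ext i j; fin_cases i <;> fin_cases j <;> simp [Rmat]

theorem smul_Rmat (r x y : k) : r • Rmat x y = Rmat (r * x) (r * y) := by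
  simp [Rmat, Matrix.smul_of]

theorem Rmat_mul_Rmat (x y z w : k) :
    Rmat x y * Rmat z w = Rmat (x * z - y * w) (x * w + y * z) := by
  ext i j; fin_cases i <;> fin_cases j <;> simp [Rmat] <;> ring

theorem Rmat_add_Rmat (x y z w : k) : Rmat x y + Rmat z w = Rmat (x + z) (y + w) := by
  simp [Rmat, add_comm]

theorem Rmat_zero_zero : Rmat 0 0 = (0 : Matrix (Fin 2) (Fin 2) k) := by
  simp [Rmat, ← Matrix.of_zero]

theorem Rmat_one_zero : Rmat 1 0 = (1 : Matrix (Fin 2) (Fin 2) k) := by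
  ext i j; fin_cases i <;> fin_cases j <;> simp [Rmat]

theorem reindex_Rmat_kronecker {a b : k} (B : Matrix (Fin 2) (Fin 2) k) :
    reindex finTwoProdEquivSum finTwoProdEquivSum (Rmat a b ⊗ₖ B) =
      fromBlocks (a • B) (-b • B) (b • B) (a • B) := by
  ext (i | i) (j | j) <;> simp [finTwoProdEquivSum, Rmat]

theorem matSimilar_Rmat_kronecker_Rmat (h2 : (2 : k) ≠ 0) (a b c d : k) :
    MatSimilar (Rmat a b ⊗ₖ Rmat c d)
      (fromBlocks (Rmat (a * c - b * d) (a * d + b * c)) 0 0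
        (Rmat (a * c + b * d) (a * d - b * c))) := by
  set S : Matrix (Fin 2 ⊕ Fin 2) (Fin 2 ⊕ Fin 2) k :=
    fromBlocks (Rmat 1 0) (Rmat 0 1) (Rmat 1 0) (Rmat 0 (-1))
  have hS : S * ((2 : k)⁻¹ • fromBlocks (Rmat 1 0) (Rmat 1 0) (Rmat 0 (-1)) (Rmat 0 1)) = 1 := by
    rw [mul_smul_comm, fromBlocks_multiply, ← fromBlocks_one, ← Rmat_zero_zero, ← Rmat_one_zero]
    simp only [Rmat_mul_Rmat, Rmat_add_Rmat, fromBlocks_smul, smul_Rmat]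
    congr 1 <;> congr 1 <;> field_simp <;> ring
  refine MatSimilar.of_mul_eq_mul finTwoProdEquivSum
    ((isUnit_iff_isUnit_det S).mpr (isUnit_det_of_right_inverse hS)) ?_
  rw [reindex_Rmat_kronecker, fromBlocks_multiply, fromBlocks_multiply, ← Rmat_zero_zero]
  simp only [smul_Rmat, Rmat_mul_Rmat, Rmat_add_Rmat]
  congr 1 <;> congr 1 <;> ring

theorem matSimilar_Rmat_zero_kronecker_Rmat_zero (h2 : (2 : k) ≠ 0) (b d : k) :
    MatSimilar (Rmat 0 b ⊗ₖ Rmat 0 d) (diagonal ![-(b * d), -(b * d), b * d, b * d]) := by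
  convert (matSimilar_Rmat_kronecker_Rmat h2 0 b 0 d).reindex_right finSumFinEquiv using 1
  simp only [Rmat_zero_right, zero_mul, mul_zero, add_zero, sub_zero, zero_sub, zero_add,
    fromBlocks_diagonal, reindex_apply, submatrix_diagonal_equiv]
  congr 1
  funext j
  fin_cases j <;> rfl

variable {a b c d : k}

theorem matSimilar_Rmat_kronecker_Rmat_of_mul_add_mul_eq_zero (h2 : (2 : k) ≠ 0)
    (h : a * d + b * c = 0) :
    MatSimilar (Rmat a b ⊗ₖ Rmat c d)
      (fromBlocks (diagonal ![a * c - b * d, a * c - b * d]) 0 0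
        (Rmat (a * c + b * d) (a * d - b * c))) := by
  simpa only [h, Rmat_zero_right] using matSimilar_Rmat_kronecker_Rmat h2 a b c d

theorem matSimilar_Rmat_kronecker_Rmat_of_mul_sub_mul_eq_zero (h2 : (2 : k) ≠ 0)
    (h : a * d - b * c = 0) :
    MatSimilar (Rmat a b ⊗ₖ Rmat c d)
      (fromBlocks (diagonal ![a * c + b * d, a * c + b * d]) 0 0
        (Rmat (a * c - b * d) (a * d + b * c))) := by
  simpa only [h, Rmat_zero_right, reindex_apply, Equiv.sumComm_symm, Equiv.sumComm_apply,
    fromBlocks_submatrix_sum_swap_sum_swap] using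
    (matSimilar_Rmat_kronecker_Rmat h2 a b c d).reindex_right (Equiv.sumComm _ _)

end Rmat

section AlgebraMap

variable {k K : Type*} [Field k] [Field K] [Algebra k K] {i : K}

theorem eq_and_eq_of_algebraMap_add_mul_eq (hi : i ∉ Set.range (algebraMap k K)) {a b a' b' : k}
    (h : algebraMap k K a + algebraMap k K b * i = algebraMap k K a' + algebraMap k K b' * i) :
    a = a' ∧ b = b' := by
  obtain rfl : b = b' := by
    by_contra hb
    refine hi ⟨(a' - a) / (b - b'), ?_⟩
    have : algebraMap k K (b - b') ≠ 0 := (map_ne_zero _).mpr (sub_ne_zero.mpr hb)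
    rw [map_div₀, div_eq_iff this, map_sub, map_sub]
    linear_combination -h
  exact ⟨(algebraMap k K).injective (add_right_cancel h), rfl⟩

theorem eq_zero_of_algebraMap_add_mul_eq_mul (hi : i ∉ Set.range (algebraMap k K)) {a b r : k}
    (h : algebraMap k K a + algebraMap k K b * i = algebraMap k K r * i) : a = 0 :=
  (eq_and_eq_of_algebraMap_add_mul_eq hi (a' := 0) (b' := r) (by rw [h, map_zero, zero_add])).1

theorem mul_sub_mul_eq_zero_of_algebraMap_add_mul_eq (hi : i ∉ Set.range (algebraMap k K))
    {a b c d r : k} (h : algebraMap k K a + algebraMap k K b * i =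
      algebraMap k K r * (algebraMap k K c + algebraMap k K d * i)) :
    a * d - b * c = 0 := by
  obtain ⟨ha, hb⟩ := eq_and_eq_of_algebraMap_add_mul_eq hi (a' := r * c) (b' := r * d)
    (by rw [h, map_mul, map_mul]; ring)
  linear_combination d * ha - c * hb

theorem two_ne_zero_of_sq_eq_neg_one (hi : i ^ 2 = -1) (hik : i ∉ Set.range (algebraMap k K)) :
    (2 : k) ≠ 0 := by
  intro h2
  have h2K : (2 : K) = 0 := by rw [← map_ofNat (algebraMap k K) 2, h2, map_zero]
  have : (i + 1) ^ 2 = 0 := by linear_combination hi + i * h2K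
  exact hik ⟨-1, by
    simpa using (eq_neg_of_add_eq_zero_left ((pow_eq_zero_iff two_ne_zero).mp this)).symm⟩

end AlgebraMap

theorem stmt18_general {k K : Type*} [Field k] [Field K] [Algebra k K] (i : K) (hi : i ^ 2 = -1)
    (a b c d : k) (lam mu lamc : K)
    (hlam : lam = algebraMap k K a + algebraMap k K b * i)
    (hmu : mu = algebraMap k K c + algebraMap k K d * i)
    (hlamc : lamc = algebraMap k K a - algebraMap k K b * i) :
    -- (1) both scalars
    ((lam ∈ Set.range (algebraMap k K)) → (mu ∈ Set.range (algebraMap k K)) →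
      MatSimilar (!![a] ⊗ₖ !![c]) !![a * c]) ∧
    -- (2) scalar times complex
    ((lam ∈ Set.range (algebraMap k K)) → (mu ∉ Set.range (algebraMap k K)) →
      MatSimilar (!![a] ⊗ₖ Rmat c d) (Rmat (a * c) (a * d))) ∧
    -- (3) both purely imaginary
    ((lam ∉ Set.range (algebraMap k K)) → (mu ∉ Set.range (algebraMap k K)) →
      (lam ∈ Set.range fun r : k => algebraMap k K r * i) →
      (mu ∈ Set.range fun r : k => algebraMap k K r * i) →
      MatSimilar (Rmat a b ⊗ₖ Rmat c d)
        (Matrix.diagonal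
          ![a * c - b * d, a * c - b * d, -(a * c - b * d), -(a * c - b * d)])) ∧
    -- (4) conjugate of lam proportional to mu
    ((lam ∉ Set.range (algebraMap k K)) → (mu ∉ Set.range (algebraMap k K)) →
      (lam ∉ Set.range fun r : k => algebraMap k K r * i) →
      (mu ∉ Set.range fun r : k => algebraMap k K r * i) →
      (∃ r : k, lamc = algebraMap k K r * mu) →
      MatSimilar (Rmat a b ⊗ₖ Rmat c d)
        (Matrix.fromBlocks (Matrix.diagonal ![a * c - b * d, a * c - b * d]) 0 0
          (Rmat (a * c + b * d) (a * d - b * c)))) ∧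
    -- (5) lam proportional to mu
    ((lam ∉ Set.range (algebraMap k K)) → (mu ∉ Set.range (algebraMap k K)) →
      (lam ∉ Set.range fun r : k => algebraMap k K r * i) →
      (mu ∉ Set.range fun r : k => algebraMap k K r * i) →
      (∃ r : k, lam = algebraMap k K r * mu) →
      MatSimilar (Rmat a b ⊗ₖ Rmat c d)
        (Matrix.fromBlocks (Matrix.diagonal ![a * c + b * d, a * c + b * d]) 0 0
          (Rmat (a * c - b * d) (a * d + b * c)))) ∧
    -- (6) otherwise
    ((lam ∉ Set.range (algebraMap k K)) → (mu ∉ Set.range (algebraMap k K)) →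
      ¬((lam ∈ Set.range fun r : k => algebraMap k K r * i) ∧
        (mu ∈ Set.range fun r : k => algebraMap k K r * i)) →
      ¬((lam ∉ Set.range fun r : k => algebraMap k K r * i) ∧
        (mu ∉ Set.range fun r : k => algebraMap k K r * i) ∧
        ∃ r : k, lamc = algebraMap k K r * mu) →
      ¬((lam ∉ Set.range fun r : k => algebraMap k K r * i) ∧
        (mu ∉ Set.range fun r : k => algebraMap k K r * i) ∧
        ∃ r : k, lam = algebraMap k K r * mu) →
      MatSimilar (Rmat a b ⊗ₖ Rmat c d)
        (Matrix.fromBlocks (Rmat (a * c - b * d) (a * d + b * c)) 0 0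
          (Rmat (a * c + b * d) (a * d - b * c)))) := by
  subst hlam hmu hlamc
  have hik : algebraMap k K a + algebraMap k K b * i ∉ Set.range (algebraMap k K) →
      i ∉ Set.range (algebraMap k K) := by
    rintro hlam ⟨t, rfl⟩
    exact hlam ⟨a + b * t, by rw [map_add, map_mul]⟩
  have h2 := fun hlam => two_ne_zero_of_sq_eq_neg_one hi (hik hlam)
  refine ⟨fun _ _ => ?_, fun _ _ => ?_, ?_, ?_, ?_,
    fun hlam _ _ _ _ => matSimilar_Rmat_kronecker_Rmat (h2 hlam) a b c d⟩
  · simpa using matSimilar_singleton_kronecker a !![c]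
  · simpa only [smul_Rmat] using matSimilar_singleton_kronecker a (Rmat c d)
  · rintro hlam - ⟨r, hr⟩ ⟨s, hs⟩
    obtain rfl := eq_zero_of_algebraMap_add_mul_eq_mul (hik hlam) hr.symm
    obtain rfl := eq_zero_of_algebraMap_add_mul_eq_mul (hik hlam) hs.symm
    simpa using matSimilar_Rmat_zero_kronecker_Rmat_zero (h2 hlam) b d
  · rintro hlam - - - ⟨r, hr⟩
    refine matSimilar_Rmat_kronecker_Rmat_of_mul_add_mul_eq_zero (h2 hlam) ?_
    have hr' : algebraMap k K a + algebraMap k K (-b) * i =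
        algebraMap k K r * (algebraMap k K c + algebraMap k K d * i) := by
      rw [map_neg, neg_mul, ← sub_eq_add_neg, hr]
    linear_combination mul_sub_mul_eq_zero_of_algebraMap_add_mul_eq (hik hlam) hr'
  · rintro hlam - - - ⟨r, hr⟩
    exact matSimilar_Rmat_kronecker_Rmat_of_mul_sub_mul_eq_zero (h2 hlam)
      (mul_sub_mul_eq_zero_of_algebraMap_add_mul_eq (hik hlam) hr)

theorem stmt18 {k K : Type*} [Field k] [Field K] [Algebra k K] [IsAlgClosed K]
    (hrank : Module.finrank k K = 2) (i : K) (hi : i ^ 2 = -1)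
    (a b c d : k) (lam mu lamc : K)
    (hlam : lam = algebraMap k K a + algebraMap k K b * i)
    (hmu : mu = algebraMap k K c + algebraMap k K d * i)
    (hlamc : lamc = algebraMap k K a - algebraMap k K b * i)
    (hlam0 : lam ≠ 0) (hmu0 : mu ≠ 0) :
    -- (1) both scalars
    ((lam ∈ Set.range (algebraMap k K)) → (mu ∈ Set.range (algebraMap k K)) →
      MatSimilar (!![a] ⊗ₖ !![c]) !![a * c]) ∧
    -- (2) scalar times complex
    ((lam ∈ Set.range (algebraMap k K)) → (mu ∉ Set.range (algebraMap k K)) →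
      MatSimilar (!![a] ⊗ₖ Rmat c d) (Rmat (a * c) (a * d))) ∧
    -- (3) both purely imaginary
    ((lam ∉ Set.range (algebraMap k K)) → (mu ∉ Set.range (algebraMap k K)) →
      (lam ∈ Set.range fun r : k => algebraMap k K r * i) →
      (mu ∈ Set.range fun r : k => algebraMap k K r * i) →
      MatSimilar (Rmat a b ⊗ₖ Rmat c d)
        (Matrix.diagonal
          ![a * c - b * d, a * c - b * d, -(a * c - b * d), -(a * c - b * d)])) ∧
    -- (4) conjugate of lam proportional to mu
    ((lam ∉ Set.range (algebraMap k K)) → (mu ∉ Set.range (algebraMap k K)) →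
      (lam ∉ Set.range fun r : k => algebraMap k K r * i) →
      (mu ∉ Set.range fun r : k => algebraMap k K r * i) →
      (∃ r : k, lamc = algebraMap k K r * mu) →
      MatSimilar (Rmat a b ⊗ₖ Rmat c d)
        (Matrix.fromBlocks (Matrix.diagonal ![a * c - b * d, a * c - b * d]) 0 0
          (Rmat (a * c + b * d) (a * d - b * c)))) ∧
    -- (5) lam proportional to mu
    ((lam ∉ Set.range (algebraMap k K)) → (mu ∉ Set.range (algebraMap k K)) →
      (lam ∉ Set.range fun r : k => algebraMap k K r * i) →
      (mu ∉ Set.range fun r : k => algebraMap k K r * i) →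
      (∃ r : k, lam = algebraMap k K r * mu) →
      MatSimilar (Rmat a b ⊗ₖ Rmat c d)
        (Matrix.fromBlocks (Matrix.diagonal ![a * c + b * d, a * c + b * d]) 0 0
          (Rmat (a * c - b * d) (a * d + b * c)))) ∧
    -- (6) otherwise
    ((lam ∉ Set.range (algebraMap k K)) → (mu ∉ Set.range (algebraMap k K)) →
      ¬((lam ∈ Set.range fun r : k => algebraMap k K r * i) ∧
        (mu ∈ Set.range fun r : k => algebraMap k K r * i)) →
      ¬((lam ∉ Set.range fun r : k => algebraMap k K r * i) ∧
        (mu ∉ Set.range fun r : k => algebraMap k K r * i) ∧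
        ∃ r : k, lamc = algebraMap k K r * mu) →
      ¬((lam ∉ Set.range fun r : k => algebraMap k K r * i) ∧
        (mu ∉ Set.range fun r : k => algebraMap k K r * i) ∧
        ∃ r : k, lam = algebraMap k K r * mu) →
      MatSimilar (Rmat a b ⊗ₖ Rmat c d)
        (Matrix.fromBlocks (Rmat (a * c - b * d) (a * d + b * c)) 0 0
          (Rmat (a * c + b * d) (a * d - b * c)))) :=
  stmt18_general i hi a b c d lam mu lamc hlam hmu hlamc
end

section
/- Let k be a field of characteristic p > 0, let α be a natural number, set q = p^α, let C be a cyclic group of order q with generator σ, let D be a cyclic group of order pq with generator τ, and regard kC as a subalgebra of kD via the algebra embedding induced by the group monomorphism σ ↦ τ^p. Then for every 1 ≤ s ≤ q, the induced module kD ⊗_{kC} (kC/((σ−1)^s kC)) is isomorphic as a kD-module to kD/((τ−1)^{ps} kD). -/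
open TensorProduct

noncomputable def auxQuotEquiv {R A : Type*} [CommRing R] [CommRing A] [Algebra R A] (a : R) :
    (A ⊗[R] (R ⧸ Ideal.span {a})) ≃ₗ[A] A ⧸ Ideal.span {algebraMap R A a} := by
  set I : Ideal R := Ideal.span {a}
  set J : Ideal A := Ideal.span {algebraMap R A a}
  have hg : ∀ x : R, x ∈ I → (Algebra.ofId R (A ⧸ J)) x = 0 := by
    intro x hx
    obtain ⟨c, rfl⟩ := Ideal.mem_span_singleton'.mp hx
    have : (Algebra.ofId R (A ⧸ J)) a = 0 := by
      show algebraMap R (A ⧸ J) a = 0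
      rw [IsScalarTower.algebraMap_apply R A (A ⧸ J)]
      exact Ideal.Quotient.eq_zero_iff_mem.mpr (Ideal.subset_span rfl)
    rw [map_mul, this, mul_zero]
  have hf : ∀ x : A, x ∈ J →
      (Algebra.ofId A (A ⊗[R] (R ⧸ I))) x = 0 := by
    intro x hx
    obtain ⟨c, rfl⟩ := Ideal.mem_span_singleton'.mp hx
    have key : (Algebra.ofId A (A ⊗[R] (R ⧸ I))) (algebraMap R A a) = 0 := by
      show (algebraMap R A a) ⊗ₜ[R] (1 : R ⧸ I) = 0
      rw [Algebra.algebraMap_eq_smul_one, smul_tmul]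
      have : a • (1 : R ⧸ I) = 0 := by
        rw [Algebra.smul_def, mul_one, Ideal.Quotient.algebraMap_eq]
        exact Ideal.Quotient.eq_zero_iff_mem.mpr (Ideal.subset_span rfl)
      rw [this, tmul_zero]
    rw [map_mul, key, mul_zero]
  let g : (R ⧸ I) →ₐ[R] A ⧸ J := Ideal.Quotient.liftₐ I (Algebra.ofId R (A ⧸ J)) hg
  let f : (A ⊗[R] (R ⧸ I)) →ₐ[A] A ⧸ J :=
    Algebra.TensorProduct.lift (Ideal.Quotient.mkₐ A J) g (fun _ _ => Commute.all _ _)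
  let f' : A ⧸ J →ₐ[A] A ⊗[R] (R ⧸ I) :=
    Ideal.Quotient.liftₐ J (Algebra.ofId A (A ⊗[R] (R ⧸ I))) hf
  have h1 : ∀ x : A, f (x ⊗ₜ[R] (1 : R ⧸ I)) = Ideal.Quotient.mk J x := by
    intro x
    simp [f, Algebra.TensorProduct.lift_tmul, g]
  have h2 : ∀ z, f' (f z) = z := by
    intro z
    induction z using TensorProduct.induction_on with
    | zero => simp
    | add x y hx hy => rw [map_add, map_add, hx, hy]
    | tmul x y =>
      obtain ⟨r, rfl⟩ := Ideal.Quotient.mk_surjective y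
      have : x ⊗ₜ[R] (Ideal.Quotient.mk I r) = (x * algebraMap R A r) ⊗ₜ[R] (1 : R ⧸ I) := by
        rw [mul_comm, Algebra.algebraMap_eq_smul_one, smul_mul_assoc, one_mul, smul_tmul]
        congr 1
        rw [Algebra.smul_def, mul_one, Ideal.Quotient.algebraMap_eq]
      rw [this, h1]
      show algebraMap A (A ⊗[R] (R ⧸ I)) (x * algebraMap R A r) = _
      rw [Algebra.TensorProduct.algebraMap_apply, Algebra.algebraMap_self_apply]
  have h3 : ∀ z, f (f' z) = z := by
    intro z
    obtain ⟨x, rfl⟩ := Ideal.Quotient.mk_surjective z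
    show f (algebraMap A (A ⊗[R] (R ⧸ I)) x) = _
    rw [Algebra.TensorProduct.algebraMap_apply, h1, Algebra.algebraMap_self_apply]
  exact (AlgEquiv.ofAlgHom f f' (AlgHom.ext h3) (AlgHom.ext h2)).toLinearEquiv

theorem stmt19 {k : Type*} [Field k] (p : ℕ) (hp : p.Prime) [CharP k p] (α : ℕ)
    {C D : Type*} [CommGroup C] [Fintype C] [CommGroup D] [Fintype D]
    (hC : Fintype.card C = p ^ α) (hD : Fintype.card D = p ^ (α + 1))
    (σ : C) (hσ : Subgroup.zpowers σ = ⊤) (τ : D) (hτ : Subgroup.zpowers τ = ⊤)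
    (φ : C →* D) (hφ : Function.Injective φ) (hφσ : φ σ = τ ^ p)
    (s : ℕ) (hs1 : 1 ≤ s) (hsq : s ≤ p ^ α) :
    letI : Algebra (MonoidAlgebra k C) (MonoidAlgebra k D) :=
      (MonoidAlgebra.mapDomainRingHom k φ).toAlgebra
    Nonempty
      ((MonoidAlgebra k D ⊗[MonoidAlgebra k C]
          (MonoidAlgebra k C ⧸ Ideal.span {(MonoidAlgebra.of k C σ - 1) ^ s})) ≃ₗ[MonoidAlgebra k D]
        (MonoidAlgebra k D ⧸ Ideal.span {(MonoidAlgebra.of k D τ - 1) ^ (p * s)})) := by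
  letI : Algebra (MonoidAlgebra k C) (MonoidAlgebra k D) :=
    (MonoidAlgebra.mapDomainRingHom k φ).toAlgebra
  haveI : Fact p.Prime := ⟨hp⟩
  haveI : CharP (MonoidAlgebra k D) p :=
    charP_of_injective_ringHom (algebraMap k (MonoidAlgebra k D)).injective p
  have key : algebraMap (MonoidAlgebra k C) (MonoidAlgebra k D)
      ((MonoidAlgebra.of k C σ - 1) ^ s) = (MonoidAlgebra.of k D τ - 1) ^ (p * s) := by
    have halg : algebraMap (MonoidAlgebra k C) (MonoidAlgebra k D) =
        MonoidAlgebra.mapDomainRingHom k φ := rfl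
    rw [halg, map_pow, map_sub, map_one]
    have h1 : (MonoidAlgebra.mapDomainRingHom k φ) (MonoidAlgebra.of k C σ) =
        MonoidAlgebra.of k D (τ ^ p) := by
      rw [← hφσ]
      simp [MonoidAlgebra.mapDomainRingHom, MonoidAlgebra.of_apply, Finsupp.mapDomain_single]
    rw [h1, pow_mul]
    congr 1
    rw [sub_pow_char, map_pow, one_pow]
  exact ⟨(auxQuotEquiv ((MonoidAlgebra.of k C σ - 1) ^ s)).trans
    (Submodule.quotEquivOfEq _ _ (by rw [key]))⟩
end
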